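/- arXiv:1401.3801 — 14 statements merged into one kernel-verified Lean document; each statement's English description precedes it below -/
import Mathlib

section
/- Let X be a nonempty finite set, M : X × X → ℝ a matrix with nonnegative entries, λ > 0 a real number, and v : X → ℝ a vector with v(x) ≥ 1 for all x satisfying Σ_{x∈X} M(x, x̄) v(x) = λ v(x̄) for every x̄ ∈ X (i.e., v is an eigenvector of the transpose of M with eigenvalue λ). Then for every vector w : X → ℝ with w(x) ≥ 0 for all x and every natural number n, λ^n · (Σ_x v(x) w(x)) / (max_x v(x)) ≤ Σ_{x, x̄ ∈ X} (M^n)(x, x̄) w(x̄) ≤ λ^n · Σ_x v(x) w(x). -/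
/-! Since `v` is a left eigenvector of `M`, pairing with `v` turns `Mⁿ` into `λⁿ`:
`⟨v, Mⁿ w⟩ = λⁿ ⟨v, w⟩`. The middle quantity is `⟨1, Mⁿ w⟩`, and `Mⁿ w ≥ 0`, so the pointwise
bounds `1 ≤ v ≤ (max v) • 1` sandwich it between `⟨v, Mⁿ w⟩ / max v` and `⟨v, Mⁿ w⟩`. -/

namespace Matrix

variable {m n R : Type*} [Fintype n]

theorem mulVec_nonneg [Semiring R] [PartialOrder R] [IsOrderedRing R]
    {M : Matrix m n R} (hM : ∀ i j, 0 ≤ M i j) {w : n → R} (hw : 0 ≤ w) : 0 ≤ M *ᵥ w :=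
  fun i => dotProduct_nonneg_of_nonneg (hM i) hw

theorem vecMul_pow_eq_smul_of_vecMul_eq_smul [DecidableEq n] [CommSemiring R]
    {M : Matrix n n R} {v : n → R} {c : R} (hv : v ᵥ* M = c • v) (k : ℕ) :
    v ᵥ* M ^ k = c ^ k • v := by
  induction k with
  | zero => simp
  | succ k ih => rw [pow_succ, ← vecMul_vecMul, ih, smul_vecMul, hv, smul_smul, pow_succ]

theorem dotProduct_pow_mulVec_of_vecMul_eq_smul [DecidableEq n] [CommSemiring R]
    {M : Matrix n n R} {v : n → R} {c : R} (hv : v ᵥ* M = c • v) (k : ℕ) (w : n → R) :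
    v ⬝ᵥ (M ^ k *ᵥ w) = c ^ k * (v ⬝ᵥ w) := by
  rw [dotProduct_mulVec, vecMul_pow_eq_smul_of_vecMul_eq_smul hv, smul_dotProduct, smul_eq_mul]

end Matrix

open Matrix in
theorem stmt_0_general {X : Type*} [Fintype X] [DecidableEq X] [Nonempty X]
    (M : Matrix X X ℝ) (hM : ∀ x x', 0 ≤ M x x')
    (lam : ℝ)
    (v : X → ℝ) (hv : ∀ x, 1 ≤ v x)
    (heig : ∀ x', ∑ x, M x x' * v x = lam * v x')
    (w : X → ℝ) (hw : ∀ x, 0 ≤ w x) (n : ℕ) :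
    lam ^ n * (∑ x, v x * w x) / (Finset.univ.sup' Finset.univ_nonempty v)
      ≤ ∑ x, ∑ x', (M ^ n) x x' * w x' ∧
    ∑ x, ∑ x', (M ^ n) x x' * w x' ≤ lam ^ n * ∑ x, v x * w x := by
  set vmax := Finset.univ.sup' Finset.univ_nonempty v
  have hv_le : v ≤ vmax • 1 := fun x => by simpa using Finset.le_sup' v (Finset.mem_univ x)
  have hvmax : 0 < vmax := one_pos.trans_le ((hv (Classical.arbitrary X)).trans (by simpa using hv_le _))
  have hleft : v ᵥ* M = lam • v := by
    rw [← mulVec_transpose]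
    exact funext heig
  have hMw : 0 ≤ M ^ n *ᵥ w := mulVec_nonneg (pow_apply_nonneg hM n) hw
  have hsum : ∑ x, ∑ x', (M ^ n) x x' * w x' = 1 ⬝ᵥ (M ^ n *ᵥ w) := by
    rw [one_dotProduct]
    rfl
  have hpair : lam ^ n * ∑ x, v x * w x = v ⬝ᵥ (M ^ n *ᵥ w) :=
    (dotProduct_pow_mulVec_of_vecMul_eq_smul hleft n w).symm
  rw [hsum, hpair]
  constructor
  · rw [div_le_iff₀ hvmax]
    calc v ⬝ᵥ (M ^ n *ᵥ w) ≤ (vmax • 1) ⬝ᵥ (M ^ n *ᵥ w) :=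
          dotProduct_le_dotProduct_of_nonneg_right hv_le hMw
      _ = 1 ⬝ᵥ (M ^ n *ᵥ w) * vmax := by rw [smul_dotProduct, smul_eq_mul, mul_comm]
  · exact dotProduct_le_dotProduct_of_nonneg_right hv hMw

/-- finite-length evaluation of the weighted sums `⟨u, Mⁿ w⟩`
via a positive eigenvector `v` of the transpose of `M`. -/
theorem stmt_0 {X : Type*} [Fintype X] [DecidableEq X] [Nonempty X]
    (M : Matrix X X ℝ) (hM : ∀ x x', 0 ≤ M x x')
    (lam : ℝ) (hlam : 0 < lam)
    (v : X → ℝ) (hv : ∀ x, 1 ≤ v x)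
    (heig : ∀ x', ∑ x, M x x' * v x = lam * v x')
    (w : X → ℝ) (hw : ∀ x, 0 ≤ w x) (n : ℕ) :
    lam ^ n * (∑ x, v x * w x) / (Finset.univ.sup' Finset.univ_nonempty v)
      ≤ ∑ x, ∑ x', (M ^ n) x x' * w x' ∧
    ∑ x, ∑ x', (M ^ n) x x' * w x' ≤ lam ^ n * ∑ x, v x * w x :=
  stmt_0_general M hM lam v hv heig w hw n
end

section
/- Let X be a nonempty finite set, W a transition matrix on X (W(x|x̄) ≥ 0 and Σ_x W(x|x̄) = 1 for every x̄), P a probability distribution on X, and g : X × X → ℝ, h : X → ℝ. For n ≥ 1 let Q_n be the probability distribution on X^{n+1} defined by Q_n(x_1, …, x_{n+1}) := P(x_1) · ∏_{i=1}^n W(x_{i+1}|x_i). Let θ ≥ 0, and suppose λ_θ > 0 and v_θ : X → ℝ with v_θ(x) ≥ 1 for all x satisfy Σ_x W(x|x̄) e^{θ g(x, x̄)} v_θ(x) = λ_θ v_θ(x̄) for every x̄ ∈ X. Set δ̄(θ) := log Σ_x v_θ(x) P(x) e^{θ h(x)}. Then for every a ∈ ℝ and every n ≥ 1, Q_n{ (x_1,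 …, x_{n+1}) : Σ_{i=1}^n g(x_{i+1}, x_i) + h(x_1) ≥ n a } ≤ exp( n log λ_θ + δ̄(θ) − n θ a ). -/
open scoped Classical

/-!
Let `S` be the sample sum. Chernoff's bound with the weight `exp (θ (S - n a)) v(x_{n+1})`, which
is `≥ 1` on the tail event, bounds the tail probability by `exp (-n θ a)` times the `v`-weighted
mass of the tilted path weights `P e^{θ h} ∏ W e^{θ g}`. Since `v` is a right eigenvector of the
tilted kernel `W e^{θ g}`, summing out the paths from the last coordinate backwards multiplies
this mass by `λ_θ` per step, leaving `λ_θ^n ∑ v P e^{θ h}`.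
-/

open Finset

theorem Finset.sum_filter_le_sum_mul {α R : Type*} [Semiring R] [PartialOrder R]
    [IsOrderedRing R] (s : Finset α) (p : α → Prop) [DecidablePred p] {f w : α → R}
    (hf : ∀ x ∈ s, 0 ≤ f x) (hw : ∀ x ∈ s, 0 ≤ w x) (hpw : ∀ x ∈ s, p x → 1 ≤ w x) :
    ∑ x ∈ s with p x, f x ≤ ∑ x ∈ s, f x * w x :=
  calc ∑ x ∈ s with p x, f x
      ≤ ∑ x ∈ s with p x, f x * w x := by
        refine sum_le_sum fun x hx => ?_
        obtain ⟨hxs, hpx⟩ := mem_filter.1 hx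
        exact le_mul_of_one_le_right (hf x hxs) (hpw x hxs hpx)
    _ ≤ ∑ x ∈ s, f x * w x :=
        sum_le_sum_of_subset_of_nonneg (filter_subset _ _)
          fun x hx _ => mul_nonneg (hf x hx) (hw x hx)

section PathWeight

variable {X R : Type*}

def pathWeight [CommMonoid R] {n : ℕ} (μ : X → R) (K : X → X → R) (x : Fin (n + 1) → X) : R :=
  μ (x 0) * ∏ i : Fin n, K (x i.succ) (x i.castSucc)

theorem pathWeight_snoc [CommMonoid R] {n : ℕ} (μ : X → R) (K : X → X → R)
    (p : Fin (n + 1) → X) (z : X) :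
    pathWeight μ K (Fin.snoc p z : Fin (n + 2) → X) = pathWeight μ K p * K z (p (Fin.last n)) := by
  have h0 : (Fin.snoc p z : Fin (n + 2) → X) 0 = p 0 := Fin.snoc_castSucc (i := 0) ..
  simp only [pathWeight, Fin.prod_univ_castSucc, Fin.succ_castSucc, Fin.snoc_castSucc,
    Fin.succ_last, Fin.snoc_last, h0, mul_assoc]

theorem sum_pathWeight_mul_eigenvector [Fintype X] [CommSemiring R] (μ : X → R)
    (K : X → X → R) (lam : R) (v : X → R) (hv : ∀ x', ∑ x, K x x' * v x = lam * v x')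
    (n : ℕ) :
    ∑ x : Fin (n + 1) → X, v (x (Fin.last n)) * pathWeight μ K x = lam ^ n * ∑ x, v x * μ x := by
  induction n with
  | zero =>
    rw [← (Equiv.funUnique (Fin 1) X).symm.sum_comp]
    simp [pathWeight]
  | succ n ih =>
    rw [← (Fin.snocEquiv fun _ => X).sum_comp, Fintype.sum_prod_type_right]
    have hsnoc (p : Fin (n + 1) → X) (z : X) :
        (Fin.snocEquiv fun _ => X) (z, p) = Fin.snoc p z := rfl
    simp only [hsnoc, Fin.snoc_last, pathWeight_snoc]
    calc _ = ∑ p : Fin (n + 1) → X, (∑ z, K z (p (Fin.last n)) * v z) * pathWeight μ K p := by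
          simp only [sum_mul]
          exact sum_congr rfl fun p _ => sum_congr rfl fun z _ => by ring
      _ = lam * ∑ p : Fin (n + 1) → X, v (p (Fin.last n)) * pathWeight μ K p := by
          simp only [hv, mul_sum, mul_assoc]
      _ = lam ^ (n + 1) * ∑ x, v x * μ x := by
          rw [ih, pow_succ', mul_assoc]

theorem pathWeight_mul_exp {n : ℕ} (P : X → ℝ) (W : X → X → ℝ) (g : X → X → ℝ)
    (h : X → ℝ) (θ : ℝ) (x : Fin (n + 1) → X) :
    pathWeight P W x * Real.exp (θ * ((∑ i : Fin n, g (x i.succ) (x i.castSucc)) + h (x 0))) =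
      pathWeight (fun y => P y * Real.exp (θ * h y)) (fun y y' => W y y' * Real.exp (θ * g y y'))
        x := by
  simp only [pathWeight, mul_add, Finset.mul_sum, Real.exp_add, Real.exp_sum,
    Finset.prod_mul_distrib]
  ring

end PathWeight

theorem stmt_2_general {X : Type*} [Fintype X]
    (W : X → X → ℝ) (hW0 : ∀ x x', 0 ≤ W x x')
    (P : X → ℝ) (hP0 : ∀ x, 0 ≤ P x)
    (g : X → X → ℝ) (h : X → ℝ)
    (θ : ℝ) (hθ : 0 ≤ θ)
    (lam : ℝ) (hlam : 0 < lam)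
    (v : X → ℝ) (hv : ∀ x, 1 ≤ v x)
    (heig : ∀ x', ∑ x, W x x' * Real.exp (θ * g x x') * v x = lam * v x')
    (a : ℝ) (n : ℕ) :
    ∑ x ∈ Finset.univ.filter (fun x : Fin (n + 1) → X =>
        (n : ℝ) * a ≤ (∑ i : Fin n, g (x i.succ) (x i.castSucc)) + h (x 0)),
      P (x 0) * ∏ i : Fin n, W (x i.succ) (x i.castSucc)
    ≤ Real.exp ((n : ℝ) * Real.log lam
        + Real.log (∑ x, v x * (P x * Real.exp (θ * h x)))
        - (n : ℝ) * θ * a) := by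
  set S : (Fin (n + 1) → X) → ℝ := fun x => (∑ i : Fin n, g (x i.succ) (x i.castSucc)) + h (x 0)
  set Z := ∑ x, v x * (P x * Real.exp (θ * h x))
  have hv0 (x : X) : 0 ≤ v x := zero_le_one.trans (hv x)
  calc ∑ x ∈ univ with (n : ℝ) * a ≤ S x, pathWeight P W x
      ≤ ∑ x, pathWeight P W x *
          (Real.exp (-(n * θ * a)) * Real.exp (θ * S x) * v (x (Fin.last n))) := by
        refine sum_filter_le_sum_mul _ _ (fun x _ => ?_)
          (fun x _ => mul_nonneg (by positivity) (hv0 _)) fun x _ hx => ?_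
        · exact mul_nonneg (hP0 _) (prod_nonneg fun i _ => hW0 _ _)
        · rw [← Real.exp_add]
          refine one_le_mul_of_one_le_of_one_le (Real.one_le_exp ?_) (hv _)
          linarith [mul_le_mul_of_nonneg_left hx hθ]
    _ = Real.exp (-(n * θ * a)) * ∑ x : Fin (n + 1) → X, v (x (Fin.last n)) *
          pathWeight (fun y => P y * Real.exp (θ * h y))
            (fun y y' => W y y' * Real.exp (θ * g y y')) x := by
        simp only [mul_sum, ← pathWeight_mul_exp]
        exact sum_congr rfl fun x _ => by ring
    _ = Real.exp (-(n * θ * a)) * (lam ^ n * Z) := by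
        rw [sum_pathWeight_mul_eigenvector _ _ lam v (by simpa only [mul_assoc] using heig)]
    _ ≤ Real.exp (-(n * θ * a)) * (lam ^ n * Real.exp (Real.log Z)) := by
        -- `Z ≤ exp (log Z)` holds for every real `Z`, `log 0 = 0` included
        gcongr
        exact Real.le_exp_log Z
    _ = Real.exp (n * Real.log lam + Real.log Z - n * θ * a) := by
        rw [sub_eq_add_neg, Real.exp_add, Real.exp_add, Real.exp_nat_mul, Real.exp_log hlam]
        ring

/-- finite-length Chernoff-type upper bound on the upper tail
probability of the sample sum `∑ g(x_{i+1}, x_i) + h(x_1)` of a Markov chain. -/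
theorem stmt_2 {X : Type*} [Fintype X] [Nonempty X]
    (W : X → X → ℝ) (hW0 : ∀ x x', 0 ≤ W x x') (hW1 : ∀ x', ∑ x, W x x' = 1)
    (P : X → ℝ) (hP0 : ∀ x, 0 ≤ P x) (hP1 : ∑ x, P x = 1)
    (g : X → X → ℝ) (h : X → ℝ)
    (θ : ℝ) (hθ : 0 ≤ θ)
    (lam : ℝ) (hlam : 0 < lam)
    (v : X → ℝ) (hv : ∀ x, 1 ≤ v x)
    (heig : ∀ x', ∑ x, W x x' * Real.exp (θ * g x x') * v x = lam * v x')
    (a : ℝ) (n : ℕ) (hn : 1 ≤ n) :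
    ∑ x ∈ Finset.univ.filter (fun x : Fin (n + 1) → X =>
        (n : ℝ) * a ≤ (∑ i : Fin n, g (x i.succ) (x i.castSucc)) + h (x 0)),
      P (x 0) * ∏ i : Fin n, W (x i.succ) (x i.castSucc)
    ≤ Real.exp ((n : ℝ) * Real.log lam
        + Real.log (∑ x, v x * (P x * Real.exp (θ * h x)))
        - (n : ℝ) * θ * a) :=
  stmt_2_general W hW0 P hP0 g h θ hθ lam hlam v hv heig a n
end

section
/- Let P be a probability distribution on a nonempty finite set X and g : X → ℝ. Define φ(θ) := log Σ_x P(x) e^{θ g(x)}. (i) For every a ∈ ℝ and every θ ≥ 0: P{x : g(x) ≥ a} ≤ exp(φ(θ) − θ a); and for every θ ≤ 0: P{x : g(x) ≤ a} ≤ exp(φ(θ) − θ a). (ii) If moreover P(x) > 0 for all x, g is not constant, and θ_a ≥ 0 satisfies φ'(θ_a) = a, then sup_{θ ≥ 0} (θ a − φ(θ)) = θ_a a − φ(θ_a) = D(P_{θ_a} ‖ P), where P_θ(x) := P(x) e^{θ g(x) − φ(θ)} and D(Q‖R) := Σ_x Q(x) log(Q(x)/R(x)). -/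
open scoped Classical

/-!
Under the weights `P`, Markov's inequality applied to `exp (θ * g)` gives the tail bounds.
Tilting `P` by `exp (θ₀ * g)` and normalising yields a probability vector whose mean of `g` is
the derivative of `log Z` at `θ₀`, where `Z` is the partition function. Jensen's inequality for
`exp` under this tilted distribution shows that `log Z` lies above its tangent line at `θ₀`.
So `θ * a - log Z θ` is maximal at `θ₀` whenever `a` is that derivative, and evaluating the
relative entropy of the tilted distribution with respect to `P` gives the same maximal value.
-/

open Real Finset

namespace FiniteExpFamily

variable {X : Type*} [Fintype X]

noncomputable def partitionFn (P g : X → ℝ) (θ : ℝ) : ℝ := ∑ x, P x * exp (θ * g x)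

noncomputable def tilted (P g : X → ℝ) (θ : ℝ) (x : X) : ℝ :=
  P x * exp (θ * g x - log (partitionFn P g θ))

variable {P : X → ℝ} (g : X → ℝ)

theorem partitionFn_pos (hP0 : ∀ x, 0 ≤ P x) (hP : ∃ x, 0 < P x) (θ : ℝ) :
    0 < partitionFn P g θ :=
  let ⟨x, hx⟩ := hP
  sum_pos' (fun y _ => mul_nonneg (hP0 y) (exp_pos _).le)
    ⟨x, mem_univ x, mul_pos hx (exp_pos _)⟩

theorem sum_le_exp_log_partitionFn_sub (hP0 : ∀ x, 0 ≤ P x) (hP : ∃ x, 0 < P x)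
    {a θ : ℝ} (s : Finset X) (hs : ∀ x ∈ s, θ * a ≤ θ * g x) :
    ∑ x ∈ s, P x ≤ exp (log (partitionFn P g θ) - θ * a) := by
  calc ∑ x ∈ s, P x
      ≤ ∑ x ∈ s, P x * exp (θ * g x - θ * a) :=
        sum_le_sum fun x hx =>
          le_mul_of_one_le_right (hP0 x) (one_le_exp (by linarith [hs x hx]))
    _ ≤ ∑ x, P x * exp (θ * g x - θ * a) :=
        sum_le_sum_of_subset_of_nonneg (subset_univ s) fun x _ _ =>
          mul_nonneg (hP0 x) (exp_pos _).le
    _ = exp (log (partitionFn P g θ) - θ * a) := by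
        rw [exp_sub, exp_log (partitionFn_pos g hP0 hP θ), partitionFn, sum_div]
        simp only [exp_sub, mul_div_assoc]

theorem tilted_eq_div (hP0 : ∀ x, 0 ≤ P x) (hP : ∃ x, 0 < P x) (θ : ℝ) (x : X) :
    tilted P g θ x = P x * exp (θ * g x) / partitionFn P g θ := by
  rw [tilted, exp_sub, exp_log (partitionFn_pos g hP0 hP θ), mul_div_assoc]

theorem sum_tilted (hP0 : ∀ x, 0 ≤ P x) (hP : ∃ x, 0 < P x) (θ : ℝ) :
    ∑ x, tilted P g θ x = 1 := by
  simp only [tilted_eq_div g hP0 hP, ← sum_div]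
  exact div_self (partitionFn_pos g hP0 hP θ).ne'

theorem hasDerivAt_log_partitionFn (hP0 : ∀ x, 0 ≤ P x) (hP : ∃ x, 0 < P x) (θ : ℝ) :
    HasDerivAt (fun θ => log (partitionFn P g θ)) (∑ x, tilted P g θ x * g x) θ := by
  have hZ : HasDerivAt (partitionFn P g) (∑ x, P x * exp (θ * g x) * g x) θ := by
    show HasDerivAt (fun θ => ∑ x, P x * exp (θ * g x)) _ θ
    refine HasDerivAt.fun_sum fun x _ => ?_
    simpa [mul_assoc] using (((hasDerivAt_id θ).mul_const (g x)).exp).const_mul (P x)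
  convert hZ.log (partitionFn_pos g hP0 hP θ).ne' using 1
  simp only [tilted_eq_div g hP0 hP, sum_div, div_mul_eq_mul_div]

theorem log_partitionFn_tangent_le (hP0 : ∀ x, 0 ≤ P x) (hP : ∃ x, 0 < P x) (θ₀ θ : ℝ) :
    log (partitionFn P g θ₀) + (θ - θ₀) * ∑ x, tilted P g θ₀ x * g x ≤
      log (partitionFn P g θ) := by
  have hw0 : ∀ x ∈ univ, 0 ≤ tilted P g θ₀ x := fun x _ =>
    mul_nonneg (hP0 x) (exp_pos _).le
  have hJ := convexOn_exp.map_sum_le hw0 (sum_tilted g hP0 hP θ₀)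
    (p := fun x => (θ - θ₀) * g x) fun _ _ => Set.mem_univ _
  have hmean : ∑ x, tilted P g θ₀ x • ((θ - θ₀) * g x) =
      (θ - θ₀) * ∑ x, tilted P g θ₀ x * g x := by
    rw [mul_sum]
    exact sum_congr rfl fun x _ => by rw [smul_eq_mul]; ring
  have hratio : ∑ x, tilted P g θ₀ x • exp ((θ - θ₀) * g x) =
      exp (log (partitionFn P g θ) - log (partitionFn P g θ₀)) := by
    rw [exp_sub, exp_log (partitionFn_pos g hP0 hP θ), partitionFn, sum_div]
    refine sum_congr rfl fun x _ => ?_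
    rw [tilted, smul_eq_mul, mul_assoc, ← exp_add, mul_div_assoc, ← exp_sub]
    congr 2
    ring
  rw [hmean, hratio, exp_le_exp] at hJ
  linarith

theorem sum_tilted_mul_log_tilted_div (hP0 : ∀ x, 0 ≤ P x) (hP : ∃ x, 0 < P x) (θ : ℝ) :
    ∑ x, tilted P g θ x * log (tilted P g θ x / P x) =
      θ * ∑ x, tilted P g θ x * g x - log (partitionFn P g θ) := by
  have hterm : ∀ x, tilted P g θ x * log (tilted P g θ x / P x) =
      θ * (tilted P g θ x * g x) - log (partitionFn P g θ) * tilted P g θ x := by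
    intro x
    rcases (hP0 x).eq_or_lt with hPx | hPx
    -- the junk value `0 / 0 = 0` makes both sides vanish
    · simp [tilted, ← hPx]
    · rw [tilted, mul_div_cancel_left₀ _ hPx.ne', log_exp]
      ring
  simp only [hterm, sum_sub_distrib, ← mul_sum, sum_tilted g hP0 hP, mul_one]

end FiniteExpFamily

open FiniteExpFamily

theorem stmt_3_general {X : Type*} [Fintype X]
    (P : X → ℝ) (hP0 : ∀ x, 0 ≤ P x) (hP1 : ∑ x, P x = 1)
    (g : X → ℝ)
    (φ : ℝ → ℝ) (hφ : ∀ θ, φ θ = Real.log (∑ x, P x * Real.exp (θ * g x))) :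
    ((∀ a θ : ℝ, 0 ≤ θ →
        ∑ x ∈ Finset.univ.filter (fun x => a ≤ g x), P x ≤ Real.exp (φ θ - θ * a)) ∧
     (∀ a θ : ℝ, θ ≤ 0 →
        ∑ x ∈ Finset.univ.filter (fun x => g x ≤ a), P x ≤ Real.exp (φ θ - θ * a))) ∧
    ((∀ x, 0 < P x) → (¬ ∃ c : ℝ, ∀ x, g x = c) →
      ∀ a θa : ℝ, 0 ≤ θa → HasDerivAt φ a θa →
        IsGreatest {y : ℝ | ∃ θ : ℝ, 0 ≤ θ ∧ y = θ * a - φ θ} (θa * a - φ θa) ∧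
        θa * a - φ θa =
          ∑ x, (P x * Real.exp (θa * g x - φ θa)) *
            Real.log ((P x * Real.exp (θa * g x - φ θa)) / P x)) := by
  obtain rfl : φ = fun θ => log (partitionFn P g θ) := funext hφ
  have hP : ∃ x, 0 < P x := by
    obtain ⟨x, -, hx⟩ := exists_ne_zero_of_sum_ne_zero (hP1 ▸ one_ne_zero)
    exact ⟨x, (hP0 x).lt_of_ne' hx⟩
  refine ⟨⟨fun a θ hθ => ?_, fun a θ hθ => ?_⟩, fun _ _ a θa hθa hderiv => ?_⟩
  · exact sum_le_exp_log_partitionFn_sub g hP0 hP _ fun x hx =>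
      mul_le_mul_of_nonneg_left (mem_filter.1 hx).2 hθ
  · exact sum_le_exp_log_partitionFn_sub g hP0 hP _ fun x hx =>
      mul_le_mul_of_nonpos_left (mem_filter.1 hx).2 hθ
  obtain rfl := hderiv.unique (hasDerivAt_log_partitionFn g hP0 hP θa)
  refine ⟨⟨⟨θa, hθa, rfl⟩, ?_⟩, (sum_tilted_mul_log_tilted_div g hP0 hP θa).symm⟩
  rintro _ ⟨θ, -, rfl⟩
  linarith [log_partitionFn_tangent_le g hP0 hP θa θ]

/-- (i) Chernoff bound for the tail probabilities of `g` under `P`;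
(ii) the Legendre transform `sup_{θ ≥ 0} (θa − φ(θ))` is attained at `θ_a` with
`φ'(θ_a) = a` and equals the relative entropy `D(P_{θ_a}‖P)` within the
exponential family generated by `g`. -/
theorem stmt_3 {X : Type*} [Fintype X] [Nonempty X]
    (P : X → ℝ) (hP0 : ∀ x, 0 ≤ P x) (hP1 : ∑ x, P x = 1)
    (g : X → ℝ)
    (φ : ℝ → ℝ) (hφ : ∀ θ, φ θ = Real.log (∑ x, P x * Real.exp (θ * g x))) :
    ((∀ a θ : ℝ, 0 ≤ θ →
        ∑ x ∈ Finset.univ.filter (fun x => a ≤ g x), P x ≤ Real.exp (φ θ - θ * a)) ∧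
     (∀ a θ : ℝ, θ ≤ 0 →
        ∑ x ∈ Finset.univ.filter (fun x => g x ≤ a), P x ≤ Real.exp (φ θ - θ * a))) ∧
    ((∀ x, 0 < P x) → (¬ ∃ c : ℝ, ∀ x, g x = c) →
      ∀ a θa : ℝ, 0 ≤ θa → HasDerivAt φ a θa →
        IsGreatest {y : ℝ | ∃ θ : ℝ, 0 ≤ θ ∧ y = θ * a - φ θ} (θa * a - φ θa) ∧
        θa * a - φ θa =
          ∑ x, (P x * Real.exp (θa * g x - φ θa)) *
            Real.log ((P x * Real.exp (θa * g x - φ θa)) / P x)) :=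
  stmt_3_general P hP0 hP1 g φ hφ
end

section
/- Let P be a probability distribution on a nonempty finite set X and g : X → ℝ, and define φ(θ) := log Σ_x P(x) e^{θ g(x)}. Let a ∈ ℝ, s > 0, θ ∈ ℝ, and θ̄ ≤ 0 be such that c := θ̄ a − φ(θ + θ̄) + φ(θ) > 0. Then P{x : g(x) ≥ a} ≥ (1 − e^{−c})^{(1+s)/s} · exp( −(φ((1+s)θ) − (1+s)φ(θ)) / s ). -/
open scoped Classical

open Finset Real

/-!
Tilt `P` by `e^{θ g}`. Since `θ̄ ≤ 0`, on `{g < a}` the weight `e^{θ g}` is at most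
`e^{-θ̄ a} e^{(θ + θ̄) g}`, so this set carries at most a fraction `e^{-c}` of the tilted mass
`e^{φ(θ)}`, and `{g ≥ a}` carries at least `(1 - e^{-c}) e^{φ(θ)}`. Hölder's inequality with
exponent `1 + s` bounds that mass by `P{g ≥ a}^{s/(1+s)} e^{φ((1+s)θ)/(1+s)}`; solving for
`P{g ≥ a}` gives the claim.
-/

section TiltedSums

variable {X : Type*} (A : Finset X) {P : X → ℝ} (g : X → ℝ)

lemma sum_mul_exp_pos (hP : ∀ x, 0 ≤ P x) (hA : 0 < ∑ x ∈ A, P x) (t : ℝ) :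
    0 < ∑ x ∈ A, P x * exp (t * g x) := by
  obtain ⟨x₀, hx₀A, hx₀⟩ := exists_lt_of_sum_lt (by simpa using hA : ∑ _ ∈ A, (0 : ℝ) < _)
  exact sum_pos' (fun x _ => mul_nonneg (hP x) (exp_pos _).le)
    ⟨x₀, hx₀A, mul_pos hx₀ (exp_pos _)⟩

lemma sum_filter_lt_mul_exp_le (hP : ∀ x, 0 ≤ P x) {a θ θbar : ℝ} (hθbar : θbar ≤ 0) :
    ∑ x ∈ A with g x < a, P x * exp (θ * g x)
      ≤ exp (-(θbar * a)) * ∑ x ∈ A, P x * exp ((θ + θbar) * g x) := by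
  rw [mul_sum]
  calc ∑ x ∈ A with g x < a, P x * exp (θ * g x)
      ≤ ∑ x ∈ A with g x < a, exp (-(θbar * a)) * (P x * exp ((θ + θbar) * g x)) := by
        refine sum_le_sum fun x hx => ?_
        have hga : θbar * a ≤ θbar * g x :=
          mul_le_mul_of_nonpos_left (mem_filter.mp hx).2.le hθbar
        rw [mul_left_comm, ← exp_add]
        exact mul_le_mul_of_nonneg_left (exp_le_exp.mpr (by linarith)) (hP x)
    _ ≤ ∑ x ∈ A, exp (-(θbar * a)) * (P x * exp ((θ + θbar) * g x)) :=
        sum_le_sum_of_subset_of_nonneg (filter_subset _ _) fun x _ _ =>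
          mul_nonneg (exp_pos _).le (mul_nonneg (hP x) (exp_pos _).le)

lemma sub_mul_exp_le_sum_filter_le (hP : ∀ x, 0 ≤ P x) {a θ θbar : ℝ} (hθbar : θbar ≤ 0) :
    ∑ x ∈ A, P x * exp (θ * g x) - exp (-(θbar * a)) * ∑ x ∈ A, P x * exp ((θ + θbar) * g x)
      ≤ ∑ x ∈ A with a ≤ g x, P x * exp (θ * g x) := by
  rw [← sum_filter_add_sum_filter_not A (fun x => a ≤ g x)]
  simp only [not_le]
  linarith [sum_filter_lt_mul_exp_le A g hP (a := a) (θ := θ) hθbar]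

lemma sum_mul_exp_le_rpow_mul_rpow [Fintype X] (hP : ∀ x, 0 ≤ P x) (θ : ℝ) {p : ℝ}
    (hp : 1 ≤ p) :
    ∑ x ∈ A, P x * exp (θ * g x)
      ≤ (∑ x ∈ A, P x) ^ (1 - p⁻¹) * (∑ x, P x * exp (p * θ * g x)) ^ p⁻¹ := by
  have hpow : ∀ x, exp (θ * g x) ^ p = exp (p * θ * g x) := fun x => by
    rw [← exp_mul]; ring_nf
  have hnonneg : ∀ x, 0 ≤ P x * exp (p * θ * g x) := fun x => mul_nonneg (hP x) (exp_pos _).le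
  calc ∑ x ∈ A, P x * exp (θ * g x)
      ≤ (∑ x ∈ A, P x) ^ (1 - p⁻¹) * (∑ x ∈ A, P x * exp (p * θ * g x)) ^ p⁻¹ := by
        simpa only [hpow] using inner_le_weight_mul_Lp_of_nonneg A hp P
          (fun x => exp (θ * g x)) hP fun x => (exp_pos _).le
    _ ≤ (∑ x ∈ A, P x) ^ (1 - p⁻¹) * (∑ x, P x * exp (p * θ * g x)) ^ p⁻¹ := by
        gcongr
        · exact rpow_nonneg (sum_nonneg fun x _ => hP x) _
        · exact sum_nonneg fun x _ => hnonneg x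
        · exact fun x _ _ => hnonneg x
        · exact subset_univ A

end TiltedSums

lemma div_rpow_inv_le_of_le_rpow_mul {K M T q : ℝ} (hK : 0 ≤ K) (hM : 0 < M) (hT : 0 ≤ T)
    (hq : 0 < q) (h : K ≤ T ^ q * M) : (K / M) ^ q⁻¹ ≤ T :=
  (rpow_inv_le_iff_of_pos (div_nonneg hK hM.le) hT hq).mpr ((div_le_iff₀ hM).mpr h)

theorem stmt_4_general {X : Type*} [Fintype X]
    (P : X → ℝ) (hP0 : ∀ x, 0 ≤ P x) (hP1 : ∑ x, P x = 1)
    (g : X → ℝ)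
    (φ : ℝ → ℝ) (hφ : ∀ θ, φ θ = Real.log (∑ x, P x * Real.exp (θ * g x)))
    (a s θ θbar : ℝ) (hs : 0 < s) (hθbar : θbar ≤ 0)
    (c : ℝ) (hc : c = θbar * a - φ (θ + θbar) + φ θ) (hcpos : 0 < c) :
    (1 - Real.exp (-c)) ^ ((1 + s) / s) *
      Real.exp (-(φ ((1 + s) * θ) - (1 + s) * φ θ) / s)
    ≤ ∑ x ∈ Finset.univ.filter (fun x => a ≤ g x), P x := by
  have hexpφ : ∀ t, exp (φ t) = ∑ x, P x * exp (t * g x) := fun t => by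
    rw [hφ, exp_log (sum_mul_exp_pos univ g hP0 (by rw [hP1]; exact one_pos) t)]
  have hu : 0 ≤ 1 - exp (-c) := by linarith [exp_lt_one_iff.mpr (neg_lt_zero.mpr hcpos)]
  have htail : (1 - exp (-c)) * exp (φ θ) ≤ ∑ x with a ≤ g x, P x * exp (θ * g x) := by
    have hexpc : exp (-c) * exp (φ θ) = exp (-(θbar * a)) * exp (φ (θ + θbar)) := by
      rw [← exp_add, ← exp_add, hc]; ring_nf
    have := sub_mul_exp_le_sum_filter_le univ g hP0 (a := a) (θ := θ) hθbar
    rw [← hexpφ, ← hexpφ] at this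
    linarith
  have hholder : ∑ x with a ≤ g x, P x * exp (θ * g x)
      ≤ (∑ x with a ≤ g x, P x) ^ (s / (1 + s)) * exp (φ ((1 + s) * θ) / (1 + s)) := by
    refine (sum_mul_exp_le_rpow_mul_rpow _ g hP0 θ (by linarith : (1 : ℝ) ≤ 1 + s)).trans ?_
    rw [show 1 - (1 + s)⁻¹ = s / (1 + s) by field_simp; ring, div_eq_mul_inv (φ ((1 + s) * θ)),
      exp_mul, hexpφ]
  have hsolved := div_rpow_inv_le_of_le_rpow_mul (mul_nonneg hu (exp_pos _).le) (exp_pos _)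
    (sum_nonneg fun x _ => hP0 x) (by positivity) (htail.trans hholder)
  rw [mul_div_assoc, ← exp_sub, inv_div, mul_rpow hu (exp_pos _).le, ← exp_mul] at hsolved
  convert hsolved using 3
  field_simp
  ring

/-- converse (lower) bound on the upper tail probability, via the
monotonicity of the Rényi relative entropy. -/
theorem stmt_4 {X : Type*} [Fintype X] [Nonempty X]
    (P : X → ℝ) (hP0 : ∀ x, 0 ≤ P x) (hP1 : ∑ x, P x = 1)
    (g : X → ℝ)
    (φ : ℝ → ℝ) (hφ : ∀ θ, φ θ = Real.log (∑ x, P x * Real.exp (θ * g x)))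
    (a s θ θbar : ℝ) (hs : 0 < s) (hθbar : θbar ≤ 0)
    (c : ℝ) (hc : c = θbar * a - φ (θ + θbar) + φ θ) (hcpos : 0 < c) :
    (1 - Real.exp (-c)) ^ ((1 + s) / s) *
      Real.exp (-(φ ((1 + s) * θ) - (1 + s) * φ θ) / s)
    ≤ ∑ x ∈ Finset.univ.filter (fun x => a ≤ g x), P x :=
  stmt_4_general P hP0 hP1 g φ hφ a s θ θbar hs hθbar c hc hcpos
end

section
/- Let P be a strictly positive probability distribution on a nonempty finite set X (P(x) > 0 for all x) and let g : X → ℝ be non-constant. Define φ(θ) := log Σ_x P(x) e^{θ g(x)} and the exponential family P_θ(x) := P(x) e^{θ g(x) − φ(θ)}. Define D(Q‖R) := Σ_x Q(x) log(Q(x)/R(x)) and D_{1+s}(Q‖R) := (1/s) log Σ_x Q(x)^{1+s} R(x)^{−s}. Let a ∈ ℝ with a > φ'(0), and suppose θ_a ∈ ℝ satisfies φ'(θ_a) = a. Then for every s > 0 and every θ > θ_a: P{x : g(x) ≥ a} ≥ (1 − e^{−D(P_{θ_a} ‖ P_θ)})^{(1+s)/s} · exp( −D_{1+s}(P_θ ‖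 P) ). -/
/-!
Under the tilted law `P_θ` with `θ > θ_a`, the Chernoff bound gives
`P_θ{g < a} ≤ E_θ[exp ((θ_a - θ)(g - a))] = exp (-D(P_{θ_a}‖P_θ))`, the last identity because
`P_{θ_a}` has mean `φ'(θ_a) = a`; hence `P_θ{g ≥ a} ≥ 1 - exp (-D(P_{θ_a}‖P_θ))`.
Hölder's inequality with exponents `1 + s` and `(1 + s)/s`, applied to `P_θ = P · (P_θ/P)`,
transfers this back to `P` at the price of the Rényi divergence:
`P_θ(A) ^ ((1 + s)/s) ≤ P(A) · exp (D_{1+s}(P_θ‖P))`.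
-/

open Real Finset

section Inequalities

variable {ι : Type*}

theorem sum_sub_sum_le_sum_mul_log_div (A : Finset ι) {Q R : ι → ℝ}
    (hQ : ∀ i, 0 ≤ Q i) (hR : ∀ i, 0 < R i) :
    ∑ i ∈ A, Q i - ∑ i ∈ A, R i ≤ ∑ i ∈ A, Q i * log (Q i / R i) := by
  rw [← sum_sub_distrib]
  refine sum_le_sum fun i _ => ?_
  rcases (hQ i).eq_or_lt with hQi | hQi
  · simp [← hQi, (hR i).le]
  · have h := one_sub_inv_le_log_of_pos (div_pos hQi (hR i))
    rw [inv_div] at h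
    calc Q i - R i = Q i * (1 - R i / Q i) := by field_simp
      _ ≤ Q i * log (Q i / R i) := mul_le_mul_of_nonneg_left h hQi.le

theorem one_sub_sum_mul_exp_le_sum_filter [Fintype ι] {Q : ι → ℝ} (hQ : ∀ i, 0 ≤ Q i)
    (hQ1 : ∑ i, Q i = 1) (g : ι → ℝ) (a : ℝ) {t : ℝ} (ht : t ≤ 0) :
    1 - ∑ i, Q i * exp (t * (g i - a)) ≤ ∑ i ∈ univ.filter (fun i => a ≤ g i), Q i := by
  have hsplit := sum_filter_add_sum_filter_not univ (fun i => a ≤ g i) Q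
  have hlow : ∑ i ∈ univ.filter (fun i => ¬ a ≤ g i), Q i ≤ ∑ i, Q i * exp (t * (g i - a)) :=
    calc ∑ i ∈ univ.filter (fun i => ¬ a ≤ g i), Q i
        ≤ ∑ i ∈ univ.filter (fun i => ¬ a ≤ g i), Q i * exp (t * (g i - a)) := by
          refine sum_le_sum fun i hi => le_mul_of_one_le_right (hQ i) (one_le_exp ?_)
          have : g i < a := not_le.mp (mem_filter.mp hi).2
          nlinarith
      _ ≤ ∑ i, Q i * exp (t * (g i - a)) :=
          sum_le_sum_of_subset_of_nonneg (filter_subset _ _)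
            fun i _ _ => mul_nonneg (hQ i) (exp_pos _).le
  linarith

theorem rpow_sum_le_sum_mul_rpow_sum (A : Finset ι) {s : ℝ} (hs : 0 < s) {Q R : ι → ℝ}
    (hQ : ∀ i, 0 ≤ Q i) (hR : ∀ i, 0 < R i) :
    (∑ i ∈ A, Q i) ^ ((1 + s) / s)
      ≤ (∑ i ∈ A, R i) * (∑ i ∈ A, Q i ^ (1 + s) * R i ^ (-s)) ^ (1 / s) := by
  have hp : (1 : ℝ) ≤ 1 + s := by linarith
  have hholder := inner_le_weight_mul_Lp_of_nonneg A hp R (fun i => Q i / R i)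
    (fun i => (hR i).le) (fun i => div_nonneg (hQ i) (hR i).le)
  have hmean : ∀ i, R i * (Q i / R i) = Q i := fun i => mul_div_cancel₀ _ (hR i).ne'
  have hrenyi : ∀ i, R i * (Q i / R i) ^ (1 + s) = Q i ^ (1 + s) * R i ^ (-s) := fun i => by
    rw [div_rpow (hQ i) (hR i).le, rpow_add (hR i), rpow_one, mul_div_assoc',
      mul_div_mul_left _ _ (hR i).ne', rpow_neg (hR i).le, div_eq_mul_inv]
  simp only [hmean, hrenyi] at hholder
  have hRA : 0 ≤ ∑ i ∈ A, R i := sum_nonneg fun i _ => (hR i).le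
  have hSA : 0 ≤ ∑ i ∈ A, Q i ^ (1 + s) * R i ^ (-s) :=
    sum_nonneg fun i _ => mul_nonneg (rpow_nonneg (hQ i) _) (rpow_nonneg (hR i).le _)
  calc (∑ i ∈ A, Q i) ^ ((1 + s) / s)
      ≤ ((∑ i ∈ A, R i) ^ (1 - (1 + s)⁻¹) * (∑ i ∈ A, Q i ^ (1 + s) * R i ^ (-s)) ^ (1 + s)⁻¹)
          ^ ((1 + s) / s) :=
        rpow_le_rpow (sum_nonneg fun i _ => hQ i) hholder (by positivity)
    _ = (∑ i ∈ A, R i) * (∑ i ∈ A, Q i ^ (1 + s) * R i ^ (-s)) ^ (1 / s) := by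
        have hexpR : (1 - (1 + s)⁻¹) * ((1 + s) / s) = 1 := by field_simp; ring
        have hexpS : (1 + s)⁻¹ * ((1 + s) / s) = 1 / s := by field_simp
        rw [mul_rpow (rpow_nonneg hRA _) (rpow_nonneg hSA _), ← rpow_mul hRA, ← rpow_mul hSA,
          hexpR, hexpS, rpow_one]

theorem rpow_sum_mul_exp_neg_renyi_le [Fintype ι] (A : Finset ι) {s : ℝ} (hs : 0 < s)
    {Q R : ι → ℝ} (hQ : ∀ i, 0 ≤ Q i) (hR : ∀ i, 0 < R i) :
    (∑ i ∈ A, Q i) ^ ((1 + s) / s) * exp (-(1 / s * log (∑ i, Q i ^ (1 + s) * R i ^ (-s))))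
      ≤ ∑ i ∈ A, R i := by
  set S := ∑ i, Q i ^ (1 + s) * R i ^ (-s)
  have hterm : ∀ i, 0 ≤ Q i ^ (1 + s) * R i ^ (-s) :=
    fun i => mul_nonneg (rpow_nonneg (hQ i) _) (rpow_nonneg (hR i).le _)
  have hSA : ∑ i ∈ A, Q i ^ (1 + s) * R i ^ (-s) ≤ S :=
    sum_le_sum_of_subset_of_nonneg (subset_univ A) fun i _ _ => hterm i
  -- Equality holds for `S > 0`; for `S = 0` the left side is `0`, since `log 0 = 0`.
  have hnorm : S ^ (1 / s) * exp (-(1 / s * log S)) ≤ 1 := by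
    have hS0 : 0 ≤ S := sum_nonneg fun i _ => hterm i
    rcases hS0.eq_or_lt with hS | hS
    · rw [← hS, zero_rpow (by positivity)]; simp
    · rw [rpow_def_of_pos hS, ← exp_add]; simp [mul_comm]
  calc (∑ i ∈ A, Q i) ^ ((1 + s) / s) * exp (-(1 / s * log S))
      ≤ (∑ i ∈ A, R i) * S ^ (1 / s) * exp (-(1 / s * log S)) := by
        gcongr
        refine (rpow_sum_le_sum_mul_rpow_sum A hs hQ hR).trans ?_
        gcongr
        · exact sum_nonneg fun i _ => (hR i).le
        · exact sum_nonneg fun i _ => hterm i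
    _ ≤ ∑ i ∈ A, R i := by
        rw [mul_assoc]
        exact mul_le_of_le_one_right (sum_nonneg fun i _ => (hR i).le) hnorm

end Inequalities

namespace ExponentialFamily

variable {X : Type*} [Fintype X]

noncomputable def cgf (P g : X → ℝ) (θ : ℝ) : ℝ := log (∑ x, P x * exp (θ * g x))

noncomputable def tilted (P g : X → ℝ) (θ : ℝ) (x : X) : ℝ := P x * exp (θ * g x - cgf P g θ)

variable [Nonempty X] {P : X → ℝ} (hP : ∀ x, 0 < P x) (g : X → ℝ)
include hP

theorem partition_pos (θ : ℝ) : 0 < ∑ x, P x * exp (θ * g x) :=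
  sum_pos (fun x _ => mul_pos (hP x) (exp_pos _)) univ_nonempty

theorem exp_cgf (θ : ℝ) : exp (cgf P g θ) = ∑ x, P x * exp (θ * g x) :=
  exp_log (partition_pos hP g θ)

omit [Nonempty X] in
theorem tilted_pos (θ : ℝ) (x : X) : 0 < tilted P g θ x :=
  mul_pos (hP x) (exp_pos _)

theorem sum_tilted_mul_exp (θ t : ℝ) :
    ∑ x, tilted P g θ x * exp (t * g x) = exp (cgf P g (θ + t) - cgf P g θ) := by
  rw [exp_sub, exp_cgf hP, exp_cgf hP, sum_div]
  refine sum_congr rfl fun x _ => ?_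
  rw [tilted, exp_sub, exp_cgf hP, add_mul, exp_add]
  ring

theorem sum_tilted (θ : ℝ) : ∑ x, tilted P g θ x = 1 := by
  simpa using sum_tilted_mul_exp hP g θ 0

theorem sum_tilted_mul_exp_sub (θ t a : ℝ) :
    ∑ x, tilted P g θ x * exp (t * (g x - a)) = exp (cgf P g (θ + t) - cgf P g θ - t * a) := by
  rw [exp_sub, ← sum_tilted_mul_exp hP, sum_div]
  simp_rw [mul_sub, exp_sub, mul_div_assoc]

theorem hasDerivAt_cgf (θ : ℝ) : HasDerivAt (cgf P g) (∑ x, tilted P g θ x * g x) θ := by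
  have hZ : HasDerivAt (fun t => ∑ x, P x * exp (t * g x)) (∑ x, P x * (exp (θ * g x) * g x)) θ :=
    HasDerivAt.fun_sum fun x _ => ((hasDerivAt_mul_const (g x)).exp).const_mul (P x)
  refine (hZ.log (partition_pos hP g θ).ne').congr_deriv ?_
  rw [← exp_cgf hP, sum_div]
  refine sum_congr rfl fun x _ => ?_
  rw [tilted, exp_sub]
  ring

theorem relEntropy_tilted (θ' θ : ℝ) :
    ∑ x, tilted P g θ' x * log (tilted P g θ' x / tilted P g θ x)
      = (θ' - θ) * ∑ x, tilted P g θ' x * g x - (cgf P g θ' - cgf P g θ) := by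
  rw [← mul_one (cgf P g θ' - cgf P g θ), ← sum_tilted hP g θ', mul_sum, mul_sum,
    ← sum_sub_distrib]
  refine sum_congr rfl fun x _ => ?_
  rw [tilted, tilted, mul_div_mul_left _ _ (hP x).ne', ← exp_sub, log_exp]
  ring

theorem relEntropy_tilted_nonneg (θ' θ : ℝ) :
    0 ≤ ∑ x, tilted P g θ' x * log (tilted P g θ' x / tilted P g θ x) := by
  have h := sum_sub_sum_le_sum_mul_log_div univ (fun x => (tilted_pos hP g θ' x).le)
    (tilted_pos hP g θ)
  rwa [sum_tilted hP g, sum_tilted hP g, sub_self] at h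

end ExponentialFamily

open ExponentialFamily

theorem stmt_5_general {X : Type*} [Fintype X] [Nonempty X]
    (P : X → ℝ) (hPpos : ∀ x, 0 < P x) (g : X → ℝ)
    (φ : ℝ → ℝ) (hφ : ∀ θ, φ θ = Real.log (∑ x, P x * Real.exp (θ * g x)))
    (Pθ : ℝ → X → ℝ) (hPθ : ∀ θ x, Pθ θ x = P x * Real.exp (θ * g x - φ θ))
    (D : (X → ℝ) → (X → ℝ) → ℝ)
    (hD : ∀ Q R, D Q R = ∑ x, Q x * Real.log (Q x / R x))
    (D' : ℝ → (X → ℝ) → (X → ℝ) → ℝ)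
    (hD' : ∀ s Q R, D' s Q R = (1 / s) * Real.log (∑ x, Q x ^ (1 + s) * R x ^ (-s)))
    (a : ℝ)
    (θa : ℝ) (hθa : HasDerivAt φ a θa) :
    ∀ s : ℝ, 0 < s → ∀ θ : ℝ, θa < θ →
      (1 - Real.exp (-(D (Pθ θa) (Pθ θ)))) ^ ((1 + s) / s) *
        Real.exp (-(D' s (Pθ θ) P))
      ≤ ∑ x ∈ Finset.univ.filter (fun x => a ≤ g x), P x := by
  intro s hs θ hθ
  obtain rfl : φ = cgf P g := funext hφ
  obtain rfl : Pθ = tilted P g := funext fun θ => funext (hPθ θ)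
  rw [hD, hD']
  set H := ∑ x, tilted P g θa x * log (tilted P g θa x / tilted P g θ x) with hH_def
  have hmean : ∑ x, tilted P g θa x * g x = a := (hasDerivAt_cgf hPpos g θa).unique hθa
  have hH : H = (θa - θ) * a - (cgf P g θa - cgf P g θ) := by
    rw [hH_def, relEntropy_tilted hPpos, hmean]
  have htail : 1 - exp (-H) ≤ ∑ x ∈ univ.filter (fun x => a ≤ g x), tilted P g θ x := by
    have h := one_sub_sum_mul_exp_le_sum_filter (fun x => (tilted_pos hPpos g θ x).le)
      (sum_tilted hPpos g θ) g a (t := θa - θ) (by linarith)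
    rw [sum_tilted_mul_exp_sub hPpos, add_sub_cancel] at h
    convert h using 3
    rw [hH]
    ring
  have hexp_le_one : exp (-H) ≤ 1 :=
    exp_le_one_iff.mpr (neg_nonpos.mpr (relEntropy_tilted_nonneg hPpos g θa θ))
  refine le_trans ?_
    (rpow_sum_mul_exp_neg_renyi_le _ hs (fun x => (tilted_pos hPpos g θ x).le) hPpos)
  gcongr

/-- information-geometric converse bound on the tail probability,
expressed with the relative entropy `D(P_{θ_a}‖P_θ)` and the relative Rényi
entropy `D_{1+s}(P_θ‖P)` along the exponential family `P_θ` generated by `g`. -/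
theorem stmt_5 {X : Type*} [Fintype X] [Nonempty X]
    (P : X → ℝ) (hPpos : ∀ x, 0 < P x) (hP1 : ∑ x, P x = 1)
    (g : X → ℝ) (hg : ¬ ∃ c : ℝ, ∀ x, g x = c)
    (φ : ℝ → ℝ) (hφ : ∀ θ, φ θ = Real.log (∑ x, P x * Real.exp (θ * g x)))
    (Pθ : ℝ → X → ℝ) (hPθ : ∀ θ x, Pθ θ x = P x * Real.exp (θ * g x - φ θ))
    (D : (X → ℝ) → (X → ℝ) → ℝ)
    (hD : ∀ Q R, D Q R = ∑ x, Q x * Real.log (Q x / R x))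
    (D' : ℝ → (X → ℝ) → (X → ℝ) → ℝ)
    (hD' : ∀ s Q R, D' s Q R = (1 / s) * Real.log (∑ x, Q x ^ (1 + s) * R x ^ (-s)))
    (m : ℝ) (hm : HasDerivAt φ m 0)
    (a : ℝ) (ha : m < a)
    (θa : ℝ) (hθa : HasDerivAt φ a θa) :
    ∀ s : ℝ, 0 < s → ∀ θ : ℝ, θa < θ →
      (1 - Real.exp (-(D (Pθ θa) (Pθ θ)))) ^ ((1 + s) / s) *
        Real.exp (-(D' s (Pθ θ) P))
      ≤ ∑ x ∈ Finset.univ.filter (fun x => a ≤ g x), P x :=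
  stmt_5_general P hPpos g φ hφ Pθ hPθ D hD D' hD' a θa hθa
end

section
/- Let X and Y be nonempty finite sets, and let W, V : (X×Y) × (X×Y) → ℝ be transition matrices on X×Y with all entries strictly positive (Σ_{x,y} W(x,y|x',y') = 1 and Σ_{x,y} V(x,y|x',y') = 1 for every (x',y')). Assume W and V are non-hidden for X, i.e., W_X(x|x') := Σ_y W(x,y|x',y') does not depend on y', and likewise V_X(x|x') := Σ_y V(x,y|x',y') does not depend on y'. Let s > 0, λ ∈ ℝ, and b : X×Y → ℝ with b(x,y) > 0 for all (x,y) satisfy λ b(x,y) = Σ_{x',y'} W(x,y|x',y')^{1+s} V(x,y|x',y')^{−s} b(x',y') for all (x,y). Define c(x) := Σ_y b(x,y). Then for every x ∈ X: Σ_{x'} W_X(x|x')^{1+s} V_X(x|x')^{−s} c(x') ≤ λ c(x). -/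
/-!
Summing the eigenvector equation over the fibre `{x} × Y` and exchanging sums gives
`lam * c x = ∑ x' y', (∑ y, W ^ (1 + s) * V ^ (-s)) * b (x', y')`. Since both matrices are
non-hidden, the column sums over `y` are `WX x x'` and `VX x x'` for every `y'`, and the reverse
Hölder inequality `(∑ a) ^ (1 + s) (∑ v) ^ (-s) ≤ ∑ a ^ (1 + s) v ^ (-s)` (joint convexity of
`(a, v) ↦ a ^ (1 + s) v ^ (-s)`) bounds each term from below by `WX ^ (1 + s) VX ^ (-s) b (x', y')`.
-/

open Finset Real

theorem rpow_sum_mul_rpow_sum_neg_le_sum {ι : Type*} [Fintype ι] {a v : ι → ℝ} {s : ℝ}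
    (hs : 0 ≤ s) (ha : ∀ i, 0 ≤ a i) (hv : ∀ i, 0 < v i) :
    (∑ i, a i) ^ (1 + s) * (∑ i, v i) ^ (-s) ≤ ∑ i, a i ^ (1 + s) * v i ^ (-s) := by
  rcases isEmpty_or_nonempty ι with _ | _
  · simp [zero_rpow (by positivity : (1 : ℝ) + s ≠ 0)]
  set p := 1 + s
  have hp : 1 ≤ p := by linarith
  have hT : 0 < ∑ i, v i := sum_pos (fun i _ ↦ hv i) univ_nonempty
  have hS : 0 ≤ ∑ i, a i ^ p * v i ^ (-s) :=
    sum_nonneg fun i _ ↦ by have := ha i; have := hv i; positivity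
  have holder := inner_le_weight_mul_Lp_of_nonneg univ hp v (fun i ↦ a i / v i)
    (fun i ↦ (hv i).le) (fun i ↦ div_nonneg (ha i) (hv i).le)
  have hweight : ∀ i, v i * (a i / v i) = a i := fun i ↦ mul_div_cancel₀ _ (hv i).ne'
  have hpow : ∀ i, v i * (a i / v i) ^ p = a i ^ p * v i ^ (-s) := fun i ↦ by
    rw [div_rpow (ha i) (hv i).le, show p = 1 + s from rfl, rpow_add (hv i), rpow_one,
      rpow_neg (hv i).le]
    have := (hv i).ne'
    have := (rpow_pos_of_pos (hv i) s).ne'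
    field_simp
  simp only [hweight, hpow] at holder
  have hA : 0 ≤ ∑ i, a i := sum_nonneg fun i _ ↦ ha i
  calc (∑ i, a i) ^ p * (∑ i, v i) ^ (-s)
      ≤ ((∑ i, v i) ^ (1 - p⁻¹) * (∑ i, a i ^ p * v i ^ (-s)) ^ p⁻¹) ^ p
          * (∑ i, v i) ^ (-s) := by gcongr
    _ = ∑ i, a i ^ p * v i ^ (-s) := by
      rw [mul_rpow (by positivity) (by positivity), ← rpow_mul hT.le, ← rpow_mul hS,
        inv_mul_cancel₀ (by positivity), rpow_one, mul_right_comm, ← rpow_add hT,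
        show (1 - p⁻¹) * p + -s = 0 by field_simp; ring, rpow_zero, one_mul]

theorem stmt_6_general {X Y : Type*} [Fintype X] [Fintype Y]
    (W V : X × Y → X × Y → ℝ)
    (hWpos : ∀ p p', 0 < W p p') (hVpos : ∀ p p', 0 < V p p')
    (WX VX : X → X → ℝ)
    (hWX : ∀ x x' y', WX x x' = ∑ y, W (x, y) (x', y'))
    (hVX : ∀ x x' y', VX x x' = ∑ y, V (x, y) (x', y'))
    (s : ℝ) (hs : 0 < s)
    (lam : ℝ) (b : X × Y → ℝ) (hb : ∀ p, 0 < b p)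
    (heig : ∀ p, lam * b p = ∑ p', W p p' ^ (1 + s) * V p p' ^ (-s) * b p')
    (c : X → ℝ) (hc : ∀ x, c x = ∑ y, b (x, y)) :
    ∀ x, ∑ x', WX x x' ^ (1 + s) * VX x x' ^ (-s) * c x' ≤ lam * c x := by
  intro x
  calc ∑ x', WX x x' ^ (1 + s) * VX x x' ^ (-s) * c x'
      = ∑ x', ∑ y', WX x x' ^ (1 + s) * VX x x' ^ (-s) * b (x', y') := by
        simp_rw [hc, mul_sum]
    _ ≤ ∑ x', ∑ y', (∑ y, W (x, y) (x', y') ^ (1 + s) * V (x, y) (x', y') ^ (-s)) * b (x', y') :=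
        sum_le_sum fun x' _ ↦ sum_le_sum fun y' _ ↦ by
          rw [hWX x x' y', hVX x x' y']
          exact mul_le_mul_of_nonneg_right (rpow_sum_mul_rpow_sum_neg_le_sum hs.le
            (fun _ ↦ (hWpos _ _).le) (fun _ ↦ hVpos _ _)) (hb _).le
    _ = ∑ y, ∑ p', W (x, y) p' ^ (1 + s) * V (x, y) p' ^ (-s) * b p' := by
        simp_rw [sum_mul]
        rw [← Fintype.sum_prod_type', sum_comm]
    _ = lam * c x := by simp_rw [← heig, hc, mul_sum]

/-- key step of the information processing inequality for
transition matrices (positive order `1+s`, `s > 0`): summing the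
Perron–Frobenius eigenvector equation over `Y` and applying the reverse Hölder
inequality yields a sub-eigenvector inequality for the marginal matrices. -/
theorem stmt_6 {X Y : Type*} [Fintype X] [Fintype Y] [Nonempty X] [Nonempty Y]
    (W V : X × Y → X × Y → ℝ)
    (hWpos : ∀ p p', 0 < W p p') (hVpos : ∀ p p', 0 < V p p')
    (hW1 : ∀ p', ∑ p, W p p' = 1) (hV1 : ∀ p', ∑ p, V p p' = 1)
    (WX VX : X → X → ℝ)
    (hWX : ∀ x x' y', WX x x' = ∑ y, W (x, y) (x', y'))
    (hVX : ∀ x x' y', VX x x' = ∑ y, V (x, y) (x', y'))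
    (s : ℝ) (hs : 0 < s)
    (lam : ℝ) (b : X × Y → ℝ) (hb : ∀ p, 0 < b p)
    (heig : ∀ p, lam * b p = ∑ p', W p p' ^ (1 + s) * V p p' ^ (-s) * b p')
    (c : X → ℝ) (hc : ∀ x, c x = ∑ y, b (x, y)) :
    ∀ x, ∑ x', WX x x' ^ (1 + s) * VX x x' ^ (-s) * c x' ≤ lam * c x :=
  stmt_6_general W V hWpos hVpos WX VX hWX hVX s hs lam b hb heig c hc
end

section
/- Let X and Y be nonempty finite sets, and let W, V : (X×Y) × (X×Y) → ℝ be transition matrices on X×Y with all entries strictly positive (Σ_{x,y} W(x,y|x',y') = 1 and Σ_{x,y} V(x,y|x',y') = 1 for every (x',y')). Assume W and V are non-hidden for X, i.e., W_X(x|x') := Σ_y W(x,y|x',y') does not depend on y', and likewise V_X(x|x') := Σ_y V(x,y|x',y') does not depend on y'. Let s ∈ (−1, 0), λ ∈ ℝ, and b : X×Y → ℝ with b(x,y) > 0 for all (x,y) satisfy λ b(x,y) = Σ_{x',y'} W(x,y|x',y')^{1+s} V(x,y|x',y')^{−s} b(x',y') for all (x,y). Define c(x) := Σ_y b(x,y).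 Then for every x ∈ X: Σ_{x'} W_X(x|x')^{1+s} V_X(x|x')^{−s} c(x') ≥ λ c(x). -/
/-!
Summing the eigenvector equation over the fibre `{x} × Y`, the coefficient of `b (x', y')` becomes
`∑ y, W (x, y) (x', y') ^ (1 + s) * V (x, y) (x', y') ^ (-s)`. Hölder's inequality with the
conjugate exponents `1 / (1 + s)` and `1 / (-s)` bounds it by
`(∑ y, W (x, y) (x', y')) ^ (1 + s) * (∑ y, V (x, y) (x', y')) ^ (-s)`, which is
`WX x x' ^ (1 + s) * VX x x' ^ (-s)` whatever `y'` is, because `W` and `V` are non-hidden for `X`.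
Summing over `y'` then turns `b` into `c`.
-/

open Finset

theorem sum_rpow_mul_rpow_le_rpow_sum_mul_rpow_sum {ι : Type*} (s : Finset ι) {f g : ι → ℝ}
    (hf : ∀ i ∈ s, 0 ≤ f i) (hg : ∀ i ∈ s, 0 ≤ g i) {p q : ℝ} (hp : 0 < p) (hq : 0 < q)
    (hpq : p + q = 1) :
    ∑ i ∈ s, f i ^ p * g i ^ q ≤ (∑ i ∈ s, f i) ^ p * (∑ i ∈ s, g i) ^ q := by
  have hconj : Real.HolderConjugate (1 / p) (1 / q) := Real.holderConjugate_one_div hp hq hpq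
  have rpow_rpow_one_div {r : ℝ} (hr : 0 < r) {a : ℝ} (ha : 0 ≤ a) : (a ^ r) ^ (1 / r) = a := by
    rw [← Real.rpow_mul ha, mul_one_div_cancel hr.ne', Real.rpow_one]
  have := Real.inner_le_Lp_mul_Lq_of_nonneg s hconj (f := fun i => f i ^ p) (g := fun i => g i ^ q)
    (fun i hi => Real.rpow_nonneg (hf i hi) p) (fun i hi => Real.rpow_nonneg (hg i hi) q)
  rwa [sum_congr rfl fun i hi => rpow_rpow_one_div hp (hf i hi),
    sum_congr rfl fun i hi => rpow_rpow_one_div hq (hg i hi), one_div_one_div,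
    one_div_one_div] at this

theorem sum_fiber_sum_mul_le_sum_mul_sum_fiber {X Y : Type*} [Fintype X] [Fintype Y]
    (K : X × Y → X × Y → ℝ) (L : X → X → ℝ) (b : X × Y → ℝ) (hb : ∀ p, 0 ≤ b p)
    (hKL : ∀ x x' y', ∑ y, K (x, y) (x', y') ≤ L x x') (x : X) :
    ∑ y, ∑ p', K (x, y) p' * b p' ≤ ∑ x', L x x' * ∑ y', b (x', y') := by
  calc ∑ y, ∑ p', K (x, y) p' * b p'
      = ∑ x', ∑ y', (∑ y, K (x, y) (x', y')) * b (x', y') := by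
        simp only [sum_mul, Fintype.sum_prod_type]
        rw [sum_comm]
        exact sum_congr rfl fun x' _ => sum_comm
    _ ≤ ∑ x', ∑ y', L x x' * b (x', y') := by
        gcongr with x' _ y' _
        · exact hb _
        · exact hKL x x' y'
    _ = ∑ x', L x x' * ∑ y', b (x', y') := by simp only [mul_sum]

theorem stmt_7_general {X Y : Type*} [Fintype X] [Fintype Y]
    (W V : X × Y → X × Y → ℝ)
    (hWpos : ∀ p p', 0 < W p p') (hVpos : ∀ p p', 0 < V p p')
    (WX VX : X → X → ℝ)
    (hWX : ∀ x x' y', WX x x' = ∑ y, W (x, y) (x', y'))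
    (hVX : ∀ x x' y', VX x x' = ∑ y, V (x, y) (x', y'))
    (s : ℝ) (hs : s ∈ Set.Ioo (-1 : ℝ) 0)
    (lam : ℝ) (b : X × Y → ℝ) (hb : ∀ p, 0 < b p)
    (heig : ∀ p, lam * b p = ∑ p', W p p' ^ (1 + s) * V p p' ^ (-s) * b p')
    (c : X → ℝ) (hc : ∀ x, c x = ∑ y, b (x, y)) :
    ∀ x, ∑ x', WX x x' ^ (1 + s) * VX x x' ^ (-s) * c x' ≥ lam * c x := by
  intro x
  rw [ge_iff_le]
  have holder : ∀ x x' y', ∑ y, W (x, y) (x', y') ^ (1 + s) * V (x, y) (x', y') ^ (-s)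
      ≤ WX x x' ^ (1 + s) * VX x x' ^ (-s) := fun x x' y' => by
    rw [hWX x x' y', hVX x x' y']
    exact sum_rpow_mul_rpow_le_rpow_sum_mul_rpow_sum univ (fun _ _ => (hWpos _ _).le)
      (fun _ _ => (hVpos _ _).le) (by linarith [hs.1]) (neg_pos.2 hs.2) (by ring)
  calc lam * c x = ∑ y, ∑ p', W (x, y) p' ^ (1 + s) * V (x, y) p' ^ (-s) * b p' := by
        rw [hc, mul_sum]
        exact sum_congr rfl fun y _ => heig (x, y)
    _ ≤ ∑ x', WX x x' ^ (1 + s) * VX x x' ^ (-s) * ∑ y', b (x', y') :=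
        sum_fiber_sum_mul_le_sum_mul_sum_fiber
          (fun p p' => W p p' ^ (1 + s) * V p p' ^ (-s)) _ b (fun p => (hb p).le) holder x
    _ = ∑ x', WX x x' ^ (1 + s) * VX x x' ^ (-s) * c x' := by simp only [hc]

/-- key step of the information processing inequality for
transition matrices (negative order `1+s`, `s ∈ (-1,0)`): summing the
Perron–Frobenius eigenvector equation over `Y` and applying the Hölder
inequality yields a super-eigenvector inequality for the marginal matrices. -/
theorem stmt_7 {X Y : Type*} [Fintype X] [Fintype Y] [Nonempty X] [Nonempty Y]
    (W V : X × Y → X × Y → ℝ)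
    (hWpos : ∀ p p', 0 < W p p') (hVpos : ∀ p p', 0 < V p p')
    (hW1 : ∀ p', ∑ p, W p p' = 1) (hV1 : ∀ p', ∑ p, V p p' = 1)
    (WX VX : X → X → ℝ)
    (hWX : ∀ x x' y', WX x x' = ∑ y, W (x, y) (x', y'))
    (hVX : ∀ x x' y', VX x x' = ∑ y, V (x, y) (x', y'))
    (s : ℝ) (hs : s ∈ Set.Ioo (-1 : ℝ) 0)
    (lam : ℝ) (b : X × Y → ℝ) (hb : ∀ p, 0 < b p)
    (heig : ∀ p, lam * b p = ∑ p', W p p' ^ (1 + s) * V p p' ^ (-s) * b p')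
    (c : X → ℝ) (hc : ∀ x, c x = ∑ y, b (x, y)) :
    ∀ x, ∑ x', WX x x' ^ (1 + s) * VX x x' ^ (-s) * c x' ≥ lam * c x :=
  stmt_7_general W V hWpos hVpos WX VX hWX hVX s hs lam b hb heig c hc
end

section
/- Let X be a nonempty finite set, W a transition matrix on X (W(x|x̄) ≥ 0 and Σ_x W(x|x̄) = 1 for every x̄), and π a strictly positive stationary distribution of W (π(x) > 0, Σ_x π(x) = 1, and Σ_{x̄} W(x|x̄) π(x̄) = π(x) for all x). Regard W as the matrix with entries W(x, x̄) := W(x|x̄) and let A be the matrix with entries A(x, x̄) := π(x). Assume W^n → A entrywise as n → ∞. Then the matrix I − (W − A) is invertible; set Z := (I − (W − A))^{−1}. Let g : X × X → ℝ, and for n ≥ 1 let Q_n be the distribution on X^{n+1} given by Q_n(x_1, …, x_{n+1}) := π(x_1) ∏_{i=1}^n W(x_{i+1}|x_i), and S_n(x_1, …, x_{n+1}) := Σ_{i=1}^n g(x_{i+1}, x_i). Then lim_{n→∞} (1/n) · ( E_{Q_n}[S_n^2] − (E_{Q_n}[S_n])^2 ) = V + 2 Σ_{u, u' ∈ X} g_*(u)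 (Z − A)(u, u') g^*(u'), where m := Σ_{x, x̄} W(x|x̄) π(x̄) g(x, x̄), V := Σ_{x, x̄} W(x|x̄) π(x̄) g(x, x̄)^2 − m^2, g_*(u) := Σ_x W(x|u) g(x, u), and g^*(u') := Σ_{x̄} W(u'|x̄) π(x̄) g(u', x̄). -/
/-!
Conditioning on the last step of the chain turns `E[S_n h(x_n)]` and `E[S_n²]` into recursions
in `n`; as `W π = π` and `1ᵀ W = 1ᵀ`, they solve to `E[S_n] = n m` and
`E[S_n²] = n E[g²] + 2 ∑_{l<n} g_*ᵀ (∑_{k<l} W^k) g^*`. Since `g_*ᵀ A g^* = m²`, the variance is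
`n V + 2 ∑_{l<n} g_*ᵀ (∑_{k<l} (W^k - A)) g^*`. As `A` is an idempotent absorbing `W` on both
sides, `W^k - A = (W - A)^k` for `k ≥ 1`, and these powers tend to `0`; hence `1 - (W - A)` is
invertible and `∑_{k<l} (W^k - A) → Z - A`. Cesàro averaging over `l` gives the limit.
-/

open Finset Filter Matrix Topology

section PathExpectation

variable {X R : Type*} [CommSemiring R]

def pathSum (g : Matrix X X R) (n : ℕ) (x : Fin (n + 1) → X) : R :=
  ∑ i : Fin n, g (x i.succ) (x i.castSucc)

lemma pathSum_snoc (g : Matrix X X R) (n : ℕ) (y : Fin (n + 1) → X) (u : X) :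
    pathSum g (n + 1) (Fin.snoc y u) = pathSum g n y + g u (y (Fin.last n)) := by
  simp [pathSum, Fin.sum_univ_castSucc, Fin.succ_castSucc, -Fin.castSucc_succ]

variable [Fintype X]

/-- `W x y` is the probability of a step from `y` to `x`, so `W` is column-stochastic
(`1 ᵥ* W = 1`) and stationarity of `π` reads `W *ᵥ π = π`. -/
def pathExpect (W : Matrix X X R) (π : X → R) (n : ℕ) (F : (Fin (n + 1) → X) → R) : R :=
  ∑ x : Fin (n + 1) → X, π (x 0) * (∏ i : Fin n, W (x i.succ) (x i.castSucc)) * F x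

lemma pathExpect_zero (W : Matrix X X R) (π : X → R) (F : (Fin 1 → X) → R) :
    pathExpect W π 0 F = ∑ u, π u * F (fun _ => u) := by
  rw [pathExpect, ← (Equiv.funUnique (Fin 1) X).symm.sum_comp]
  simp only [Equiv.funUnique_symm_apply, Fin.prod_univ_zero, mul_one]
  rfl

lemma pathExpect_succ (W : Matrix X X R) (π : X → R) (n : ℕ) (F : (Fin (n + 2) → X) → R) :
    pathExpect W π (n + 1) F =
      pathExpect W π n (fun y => ∑ u, W u (y (Fin.last n)) * F (Fin.snoc y u)) := by
  rw [pathExpect, ← (Fin.snocEquiv fun _ => X).sum_comp, Fintype.sum_prod_type, sum_comm]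
  simp only [pathExpect, mul_sum]
  refine sum_congr rfl fun y _ => sum_congr rfl fun u _ => ?_
  have hsnoc : (Fin.snocEquiv fun _ => X) (u, y) = Fin.snoc y u := rfl
  simp only [hsnoc, Fin.snoc_apply_zero, Fin.snoc_castSucc, Fin.snoc_last, Fin.prod_univ_castSucc,
    Fin.succ_castSucc, Fin.succ_last]
  ring

lemma pathExpect_add (W : Matrix X X R) (π : X → R) (n : ℕ) (F G : (Fin (n + 1) → X) → R) :
    pathExpect W π n (fun x => F x + G x) = pathExpect W π n F + pathExpect W π n G := by
  simp only [pathExpect, mul_add, sum_add_distrib]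

lemma pathExpect_const_mul (W : Matrix X X R) (π : X → R) (n : ℕ) (c : R)
    (F : (Fin (n + 1) → X) → R) :
    pathExpect W π n (fun x => c * F x) = c * pathExpect W π n F := by
  simp only [pathExpect, mul_sum]
  exact sum_congr rfl fun _ _ => by ring

variable {W : Matrix X X R} {π : X → R}

lemma pathExpect_comp_last (hπ : W *ᵥ π = π) (n : ℕ) (h : X → R) :
    pathExpect W π n (fun x => h (x (Fin.last n))) = π ⬝ᵥ h := by
  induction n generalizing h with
  | zero => rw [pathExpect_zero]; rfl
  | succ n ih =>
    have hstep : ∀ y : Fin (n + 1) → X,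
        ∑ u, W u (y (Fin.last n)) * h u = (h ᵥ* W) (y (Fin.last n)) := fun y => by
      simp only [vecMul, dotProduct, mul_comm]
    rw [pathExpect_succ]
    simp only [Fin.snoc_last, hstep]
    rw [ih, dotProduct_comm, ← dotProduct_mulVec, hπ, dotProduct_comm]

variable [DecidableEq X]

lemma pathExpect_pathSum_mul_last (hπ : W *ᵥ π = π) (g : Matrix X X R) (n : ℕ)
    (h : X → R) :
    pathExpect W π n (fun x => pathSum g n x * h (x (Fin.last n))) =
      h ⬝ᵥ ∑ k ∈ range n, W ^ k *ᵥ ((W ⊙ g) *ᵥ π) := by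
  induction n generalizing h with
  | zero => simp [pathSum, pathExpect]
  | succ n ih =>
    have hstep : ∀ y : Fin (n + 1) → X,
        ∑ u, W u (y (Fin.last n)) * (pathSum g (n + 1) (Fin.snoc y u) * h u) =
          pathSum g n y * (h ᵥ* W) (y (Fin.last n)) + (h ᵥ* (W ⊙ g)) (y (Fin.last n)) :=
      fun y => by
        simp only [pathSum_snoc, vecMul, dotProduct, hadamard_apply, mul_sum, ← sum_add_distrib]
        exact sum_congr rfl fun _ _ => by ring
    rw [pathExpect_succ]
    simp only [Fin.snoc_last, hstep]
    rw [pathExpect_add, ih, pathExpect_comp_last hπ, ← dotProduct_mulVec, mulVec_sum,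
      dotProduct_comm π, ← dotProduct_mulVec, ← dotProduct_add, sum_range_succ', pow_zero,
      one_mulVec]
    simp only [mulVec_mulVec, ← mul_assoc, ← pow_succ']

lemma vecMul_pow_eq_self {v : X → R} {M : Matrix X X R} (h : v ᵥ* M = v) (k : ℕ) :
    v ᵥ* M ^ k = v := by
  induction k with
  | zero => rw [pow_zero, vecMul_one]
  | succ k ih => rw [pow_succ, ← vecMul_vecMul, ih, h]

lemma pathExpect_pathSum (hπ : W *ᵥ π = π) (hW : 1 ᵥ* W = 1) (g : Matrix X X R) (n : ℕ) :
    pathExpect W π n (pathSum g n) = n * (1 ⬝ᵥ ((W ⊙ g) *ᵥ π)) := by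
  have h := pathExpect_pathSum_mul_last hπ g n 1
  simp only [Pi.one_apply, mul_one] at h
  rw [h, dotProduct_sum, sum_congr rfl fun k _ => by rw [dotProduct_mulVec, vecMul_pow_eq_self hW],
    sum_const, card_range, nsmul_eq_mul]

lemma pathExpect_pathSum_sq (hπ : W *ᵥ π = π) (hW : 1 ᵥ* W = 1) (g : Matrix X X R)
    (n : ℕ) :
    pathExpect W π n (fun x => pathSum g n x ^ 2) =
      n * (1 ⬝ᵥ ((W ⊙ g ⊙ g) *ᵥ π)) +
        2 * ∑ l ∈ range n,
          (1 ᵥ* (W ⊙ g)) ⬝ᵥ ∑ k ∈ range l, W ^ k *ᵥ ((W ⊙ g) *ᵥ π) := by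
  induction n with
  | zero => simp [pathSum, pathExpect]
  | succ n ih =>
    have hstep : ∀ y : Fin (n + 1) → X,
        ∑ u, W u (y (Fin.last n)) * pathSum g (n + 1) (Fin.snoc y u) ^ 2 =
          pathSum g n y ^ 2 + (2 * (pathSum g n y * (1 ᵥ* (W ⊙ g)) (y (Fin.last n))) +
            (1 ᵥ* (W ⊙ g ⊙ g)) (y (Fin.last n))) := fun y => by
      set v := y (Fin.last n)
      set s := pathSum g n y
      have hcol : ∑ u, W u v = 1 := by simpa [vecMul, dotProduct] using congrFun hW v
      simp only [pathSum_snoc, vecMul, dotProduct, Pi.one_apply, one_mul, hadamard_apply]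
      calc ∑ u, W u v * (s + g u v) ^ 2
          = s ^ 2 * ∑ u, W u v +
              (2 * (s * ∑ u, W u v * g u v) + ∑ u, W u v * g u v * g u v) := by
            simp only [mul_sum, ← sum_add_distrib]
            exact sum_congr rfl fun _ _ => by ring
        _ = _ := by rw [hcol, mul_one]
    rw [pathExpect_succ]
    simp only [hstep]
    rw [pathExpect_add, pathExpect_add, pathExpect_const_mul, ih, pathExpect_pathSum_mul_last hπ,
      pathExpect_comp_last hπ, dotProduct_comm π, ← dotProduct_mulVec 1 (W ⊙ g ⊙ g),
      sum_range_succ]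
    push_cast
    ring

end PathExpectation

section PathVariance

variable {X R : Type*} [Fintype X] [CommRing R]

def pathVariance (W : Matrix X X R) (π : X → R) (n : ℕ) (F : (Fin (n + 1) → X) → R) : R :=
  pathExpect W π n (fun x => F x ^ 2) - pathExpect W π n F ^ 2

variable [DecidableEq X] {W : Matrix X X R} {π : X → R}

lemma pathVariance_pathSum (hπ : W *ᵥ π = π) (hW : 1 ᵥ* W = 1) (g : Matrix X X R) (n : ℕ) :
    pathVariance W π n (pathSum g n) =
      n * (1 ⬝ᵥ ((W ⊙ g ⊙ g) *ᵥ π) - (1 ⬝ᵥ ((W ⊙ g) *ᵥ π)) ^ 2) +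
        2 * ∑ l ∈ range n, (1 ᵥ* (W ⊙ g)) ⬝ᵥ
          ((∑ k ∈ range l, (W ^ k - vecMulVec π 1)) *ᵥ ((W ⊙ g) *ᵥ π)) := by
  set m := 1 ⬝ᵥ ((W ⊙ g) *ᵥ π)
  have hstat : (1 ᵥ* (W ⊙ g)) ⬝ᵥ (vecMulVec π 1 *ᵥ ((W ⊙ g) *ᵥ π)) = m ^ 2 := by
    have hm : (1 ᵥ* (W ⊙ g)) ⬝ᵥ π = m := (dotProduct_mulVec _ _ _).symm
    rw [vecMulVec_mulVec, op_smul_eq_smul, dotProduct_smul, hm, smul_eq_mul, sq]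
  have hgauss : ∀ n : ℕ, (n : R) ^ 2 = n + 2 * ∑ l ∈ range n, (l : R) := fun n => by
    induction n with
    | zero => simp
    | succ n ih => rw [sum_range_succ]; push_cast; linear_combination ih
  rw [pathVariance, pathExpect_pathSum_sq hπ hW, pathExpect_pathSum hπ hW]
  simp only [sum_mulVec, sub_mulVec]
  simp only [sum_sub_distrib, sum_const, card_range, dotProduct_sub, dotProduct_smul, hstat]
  simp only [nsmul_eq_mul, ← sum_mul]
  linear_combination (-m ^ 2) * hgauss n

end PathVariance

section FundamentalMatrix

lemma sub_pow_succ_of_mul_eq {R : Type*} [Ring R] {w a : R} (hwa : w * a = a) (haw : a * w = a)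
    (haa : a * a = a) (k : ℕ) : (w - a) ^ (k + 1) = w ^ (k + 1) - a := by
  have hpow : ∀ j : ℕ, w ^ j * a = a := fun j => by
    induction j with
    | zero => rw [pow_zero, one_mul]
    | succ j ih => rw [pow_succ, mul_assoc, hwa, ih]
  induction k with
  | zero => rw [zero_add, pow_one, pow_one]
  | succ k ih =>
    rw [pow_succ, ih, sub_mul, mul_sub, mul_sub, hpow, haw, haa, ← pow_succ]
    abel

lemma tendsto_geom_sum_of_tendsto_pow_zero {R : Type*} [Ring R] [TopologicalSpace R]
    [IsTopologicalRing R] {b : R} (hb : Tendsto (b ^ ·) atTop (𝓝 0)) (hu : IsUnit (1 - b)) :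
    Tendsto (fun l => ∑ k ∈ range l, b ^ k) atTop (𝓝 (Ring.inverse (1 - b))) := by
  have hgeom : ∀ l, ∑ k ∈ range l, b ^ k = Ring.inverse (1 - b) * (1 - b ^ l) := fun l => by
    rw [← mul_neg_geom_sum, ← mul_assoc, Ring.inverse_mul_cancel _ hu, one_mul]
  simpa [hgeom] using
    (tendsto_const_nhds (x := Ring.inverse (1 - b))).mul ((tendsto_const_nhds (x := 1)).sub hb)

variable {ι 𝕜 : Type*} [Fintype ι] [DecidableEq ι] [Field 𝕜] [TopologicalSpace 𝕜]
  [IsTopologicalRing 𝕜] [T1Space 𝕜]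

/-- `det (1 - B)` divides `det (1 - B ^ l)`, which tends to `det 1 = 1`. -/
lemma Matrix.isUnit_one_sub_of_tendsto_pow_zero {B : Matrix ι ι 𝕜}
    (hB : Tendsto (B ^ ·) atTop (𝓝 0)) : IsUnit (1 - B) := by
  have hdet : Tendsto (fun l => (1 - B ^ l).det) atTop (𝓝 1) := by
    simpa [Function.comp_def] using (continuous_id.matrix_det.tendsto (1 - 0)).comp
      ((tendsto_const_nhds (x := (1 : Matrix ι ι 𝕜))).sub hB)
  obtain ⟨l, hl⟩ := (hdet.eventually_ne one_ne_zero).exists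
  rw [isUnit_iff_isUnit_det, isUnit_iff_ne_zero]
  intro h0
  rw [← mul_neg_geom_sum, det_mul, h0, zero_mul] at hl
  exact hl rfl

lemma Matrix.tendsto_sum_range_pow_sub {W A : Matrix ι ι 𝕜} (hWA : W * A = A) (hAW : A * W = A)
    (hAA : A * A = A) (hW : Tendsto (W ^ ·) atTop (𝓝 A)) :
    IsUnit (1 - (W - A)) ∧ Tendsto (fun l => ∑ k ∈ range l, (W ^ k - A)) atTop
      (𝓝 (Ring.inverse (1 - (W - A)) - A)) := by
  have hpow := sub_pow_succ_of_mul_eq hWA hAW hAA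
  have hB : Tendsto ((W - A) ^ ·) atTop (𝓝 0) := by
    rw [← tendsto_add_atTop_iff_nat 1]
    simpa [hpow] using ((tendsto_add_atTop_iff_nat 1).2 hW).sub_const A
  have hu := isUnit_one_sub_of_tendsto_pow_zero hB
  refine ⟨hu, ?_⟩
  have hsum : ∀ l,
      ∑ k ∈ range (l + 1), (W ^ k - A) = ∑ k ∈ range (l + 1), (W - A) ^ k - A := fun l => by
    simp only [sum_range_succ', hpow, pow_zero]
    abel
  rw [← tendsto_add_atTop_iff_nat 1]
  simpa [hsum] using
    ((tendsto_add_atTop_iff_nat 1).2 (tendsto_geom_sum_of_tendsto_pow_zero hB hu)).sub_const A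

end FundamentalMatrix

section AsymptoticVariance

variable {X : Type*} [Fintype X] [DecidableEq X] {W : Matrix X X ℝ} {π : X → ℝ}

theorem tendsto_pathVariance_pathSum_div (hπ : W *ᵥ π = π) (hW : 1 ᵥ* W = 1)
    (hπ1 : 1 ⬝ᵥ π = 1) (hconv : Tendsto (W ^ ·) atTop (𝓝 (vecMulVec π 1)))
    (g : Matrix X X ℝ) :
    IsUnit (1 - (W - vecMulVec π 1)) ∧
    Tendsto (fun n : ℕ => (1 / (n : ℝ)) * pathVariance W π n (pathSum g n)) atTop
      (𝓝 (1 ⬝ᵥ ((W ⊙ g ⊙ g) *ᵥ π) - (1 ⬝ᵥ ((W ⊙ g) *ᵥ π)) ^ 2 +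
        2 * (1 ᵥ* (W ⊙ g)) ⬝ᵥ
        ((Ring.inverse (1 - (W - vecMulVec π 1)) - vecMulVec π 1) *ᵥ ((W ⊙ g) *ᵥ π)))) := by
  obtain ⟨hu, hZ⟩ := tendsto_sum_range_pow_sub (by rw [mul_vecMulVec, hπ])
    (by rw [vecMulVec_mul, hW]) (by rw [vecMulVec_mul_vecMulVec, hπ1, one_smul]) hconv
  refine ⟨hu, ?_⟩
  have hT : Tendsto (fun l =>
      (1 ᵥ* (W ⊙ g)) ⬝ᵥ ((∑ k ∈ range l, (W ^ k - vecMulVec π 1)) *ᵥ ((W ⊙ g) *ᵥ π)))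
      atTop (𝓝 ((1 ᵥ* (W ⊙ g)) ⬝ᵥ
        ((Ring.inverse (1 - (W - vecMulVec π 1)) - vecMulVec π 1) *ᵥ ((W ⊙ g) *ᵥ π)))) :=
    ((continuous_const.dotProduct
      (continuous_id.matrix_mulVec continuous_const)).tendsto _).comp hZ
  refine (tendsto_const_nhds.add (hT.cesaro.const_mul 2)).congr' ?_
  filter_upwards [eventually_ge_atTop 1] with n hn
  rw [pathVariance_pathSum hπ hW]
  field_simp

end AsymptoticVariance

theorem stmt_8_general {X : Type*} [Fintype X] [DecidableEq X]
    (W : Matrix X X ℝ) (hW1 : ∀ x', ∑ x, W x x' = 1)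
    (π : X → ℝ) (hπ1 : ∑ x, π x = 1)
    (hπstat : ∀ x, ∑ x', W x x' * π x' = π x)
    (A : Matrix X X ℝ) (hA : ∀ x x', A x x' = π x)
    (hconv : ∀ x x', Filter.Tendsto (fun n : ℕ => (W ^ n) x x') Filter.atTop (nhds (A x x')))
    (g : X → X → ℝ)
    (Q : (n : ℕ) → (Fin (n + 1) → X) → ℝ)
    (hQ : ∀ n (x : Fin (n + 1) → X),
      Q n x = π (x 0) * ∏ i : Fin n, W (x i.succ) (x i.castSucc))
    (S : (n : ℕ) → (Fin (n + 1) → X) → ℝ)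
    (hS : ∀ n (x : Fin (n + 1) → X),
      S n x = ∑ i : Fin n, g (x i.succ) (x i.castSucc))
    (m : ℝ) (hm : m = ∑ x, ∑ x', W x x' * π x' * g x x')
    (V : ℝ) (hV : V = (∑ x, ∑ x', W x x' * π x' * g x x' ^ 2) - m ^ 2)
    (gst : X → ℝ) (hgst : ∀ u, gst u = ∑ x, W x u * g x u)
    (gss : X → ℝ) (hgss : ∀ u', gss u' = ∑ x', W u' x' * π x' * g u' x') :
    IsUnit (1 - (W - A)) ∧
    Filter.Tendsto
      (fun n : ℕ => (1 / (n : ℝ)) *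
        ((∑ x : Fin (n + 1) → X, Q n x * S n x ^ 2) -
          (∑ x : Fin (n + 1) → X, Q n x * S n x) ^ 2))
      Filter.atTop
      (nhds (V + 2 * ∑ u, ∑ u', gst u * (Ring.inverse (1 - (W - A)) - A) u u' * gss u')) := by
  obtain rfl : A = vecMulVec π 1 := Matrix.ext fun x x' => by simp [hA, vecMulVec_apply]
  obtain rfl : Q = fun n x => π (x 0) * ∏ i : Fin n, W (x i.succ) (x i.castSucc) :=
    funext fun n => funext (hQ n)
  obtain rfl : S = pathSum (of g) := funext fun n => funext (hS n)
  obtain rfl : gst = 1 ᵥ* (W ⊙ of g) := funext fun u => by simp [hgst, vecMul, dotProduct]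
  obtain rfl : gss = (W ⊙ of g) *ᵥ π := funext fun u => by
    simp only [hgss, mulVec, dotProduct, hadamard_apply, of_apply, mul_right_comm]
  have hm' : m = 1 ⬝ᵥ ((W ⊙ of g) *ᵥ π) := by
    simp only [hm, mulVec, dotProduct, hadamard_apply, of_apply, Pi.one_apply, one_mul,
      mul_right_comm]
  have hV' : V = 1 ⬝ᵥ ((W ⊙ of g ⊙ of g) *ᵥ π) - m ^ 2 := by
    rw [hV]
    congr 1
    simp only [mulVec, dotProduct, hadamard_apply, of_apply, Pi.one_apply, one_mul]
    exact sum_congr rfl fun _ _ => sum_congr rfl fun _ _ => by ring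
  have hbilin : ∀ (v w : X → ℝ) (M : Matrix X X ℝ),
      ∑ u, ∑ u', v u * M u u' * w u' = v ⬝ᵥ (M *ᵥ w) := fun v w M => by
    simp only [dotProduct, mulVec, mul_sum, mul_assoc]
  simp only [hbilin, hV', hm']
  exact tendsto_pathVariance_pathSum_div (funext hπstat)
    (funext fun x' => by simp [vecMul, dotProduct, hW1]) (by simpa [dotProduct] using hπ1)
    (tendsto_pi_nhds.2 fun x => tendsto_pi_nhds.2 (hconv x)) (of g)

/-- the asymptotic variance per step of the sample sum
`S_n = ∑ g(x_{i+1}, x_i)` of a stationary Markov chain equals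
`V + 2 g_*ᵀ (Z − A) g^*`, where `Z = (I − (W − A))⁻¹` is the fundamental
matrix of the chain (Kemeny–Snell). -/
theorem stmt_8 {X : Type*} [Fintype X] [DecidableEq X] [Nonempty X]
    (W : Matrix X X ℝ) (hW0 : ∀ x x', 0 ≤ W x x') (hW1 : ∀ x', ∑ x, W x x' = 1)
    (π : X → ℝ) (hπpos : ∀ x, 0 < π x) (hπ1 : ∑ x, π x = 1)
    (hπstat : ∀ x, ∑ x', W x x' * π x' = π x)
    (A : Matrix X X ℝ) (hA : ∀ x x', A x x' = π x)
    (hconv : ∀ x x', Filter.Tendsto (fun n : ℕ => (W ^ n) x x') Filter.atTop (nhds (A x x')))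
    (g : X → X → ℝ)
    (Q : (n : ℕ) → (Fin (n + 1) → X) → ℝ)
    (hQ : ∀ n (x : Fin (n + 1) → X),
      Q n x = π (x 0) * ∏ i : Fin n, W (x i.succ) (x i.castSucc))
    (S : (n : ℕ) → (Fin (n + 1) → X) → ℝ)
    (hS : ∀ n (x : Fin (n + 1) → X),
      S n x = ∑ i : Fin n, g (x i.succ) (x i.castSucc))
    (m : ℝ) (hm : m = ∑ x, ∑ x', W x x' * π x' * g x x')
    (V : ℝ) (hV : V = (∑ x, ∑ x', W x x' * π x' * g x x' ^ 2) - m ^ 2)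
    (gst : X → ℝ) (hgst : ∀ u, gst u = ∑ x, W x u * g x u)
    (gss : X → ℝ) (hgss : ∀ u', gss u' = ∑ x', W u' x' * π x' * g u' x') :
    IsUnit (1 - (W - A)) ∧
    Filter.Tendsto
      (fun n : ℕ => (1 / (n : ℝ)) *
        ((∑ x : Fin (n + 1) → X, Q n x * S n x ^ 2) -
          (∑ x : Fin (n + 1) → X, Q n x * S n x) ^ 2))
      Filter.atTop
      (nhds (V + 2 * ∑ u, ∑ u', gst u * (Ring.inverse (1 - (W - A)) - A) u u' * gss u')) :=
  stmt_8_general W hW1 π hπ1 hπstat A hA hconv g Q hQ S hS m hm V hV gst hgst gss hgss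
end

section
/- Let X be a nonempty finite set and let P0 and P1 be strictly positive probability distributions on X (P0(x) > 0 and P1(x) > 0 for all x). A test is a function T : X → [0,1], and for ε ∈ [0,1] define β_ε(P1‖P0) := inf { Σ_x P0(x)(1 − T(x)) : T a test with Σ_x P1(x) T(x) ≤ ε }. Then for every a ∈ ℝ and ε ∈ [0,1]: if P1{ x : log(P1(x)/P0(x)) < a } ≤ ε, then β_ε(P1‖P0) ≤ e^{−a}. -/
/-!
Use the deterministic likelihood-ratio test `T = 1` on `{log (P1 / P0) < a}`, `T = 0` elsewhere.
Its first-kind error is `P1 {log (P1 / P0) < a} ≤ ε`, so it is admissible; off that set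
`P0 ≤ e^{-a} P1`, so its second-kind error is at most `e^{-a} · P1(X) = e^{-a}`.
-/

open Real Finset

theorem le_exp_neg_mul_of_le_log_div {p q a : ℝ} (hp : 0 < p) (hq : 0 < q)
    (h : a ≤ log (q / p)) : p ≤ exp (-a) * q := by
  have hexp : exp a * p ≤ q := (le_div_iff₀ hp).mp ((le_log_iff_exp_le (div_pos hq hp)).mp h)
  calc p = exp (-a) * (exp a * p) := by
        rw [← mul_assoc, ← exp_add, neg_add_cancel, exp_zero, one_mul]
    _ ≤ exp (-a) * q := mul_le_mul_of_nonneg_left hexp (exp_pos _).le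

section Test

variable {X : Type*}

theorem sInf_typeTwoError_le [Fintype X] {P0 : X → ℝ} (hP0 : ∀ x, 0 ≤ P0 x)
    {p : (X → ℝ) → Prop} {T : X → ℝ} (hT : ∀ x, T x ∈ Set.Icc (0 : ℝ) 1)
    (hpT : p T) :
    sInf {b : ℝ | ∃ T : X → ℝ, (∀ x, T x ∈ Set.Icc (0 : ℝ) 1) ∧ p T ∧
        b = ∑ x, P0 x * (1 - T x)} ≤ ∑ x, P0 x * (1 - T x) := by
  refine csInf_le ⟨0, ?_⟩ ⟨T, hT, hpT, rfl⟩
  rintro _ ⟨S, hS, -, rfl⟩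
  exact sum_nonneg fun x _ => mul_nonneg (hP0 x) (sub_nonneg.mpr (hS x).2)

noncomputable def likelihoodRatioTest (P0 P1 : X → ℝ) (a : ℝ) (x : X) : ℝ :=
  if log (P1 x / P0 x) < a then 1 else 0

variable (P0 P1 : X → ℝ) (a : ℝ)

theorem likelihoodRatioTest_mem_Icc (x : X) :
    likelihoodRatioTest P0 P1 a x ∈ Set.Icc (0 : ℝ) 1 := by
  unfold likelihoodRatioTest
  split_ifs <;> norm_num

theorem sum_mul_likelihoodRatioTest [Fintype X] :
    ∑ x, P1 x * likelihoodRatioTest P0 P1 a x =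
      ∑ x ∈ univ.filter (fun x => log (P1 x / P0 x) < a), P1 x := by
  simp only [likelihoodRatioTest, mul_ite, mul_one, mul_zero, sum_filter]

theorem mul_one_sub_likelihoodRatioTest_le {x : X} (hP0 : 0 < P0 x) (hP1 : 0 < P1 x) :
    P0 x * (1 - likelihoodRatioTest P0 P1 a x) ≤ exp (-a) * P1 x := by
  unfold likelihoodRatioTest
  split_ifs with hx
  · rw [sub_self, mul_zero]
    positivity
  · rw [sub_zero, mul_one]
    exact le_exp_neg_mul_of_le_log_div hP0 hP1 (not_lt.mp hx)

theorem sum_mul_one_sub_likelihoodRatioTest_le [Fintype X] (hP0 : ∀ x, 0 < P0 x)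
    (hP1 : ∀ x, 0 < P1 x) :
    ∑ x, P0 x * (1 - likelihoodRatioTest P0 P1 a x) ≤ exp (-a) * ∑ x, P1 x := by
  rw [mul_sum]
  exact sum_le_sum fun x _ => mul_one_sub_likelihoodRatioTest_le P0 P1 a (hP0 x) (hP1 x)

end Test

theorem stmt_9_general {X : Type*} [Fintype X]
    (P0 P1 : X → ℝ) (hP0pos : ∀ x, 0 < P0 x) (hP1pos : ∀ x, 0 < P1 x)
    (hP1 : ∑ x, P1 x = 1)
    (a : ℝ) (ε : ℝ)
    (h : ∑ x ∈ Finset.univ.filter (fun x => Real.log (P1 x / P0 x) < a), P1 x ≤ ε) :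
    sInf {b : ℝ | ∃ T : X → ℝ, (∀ x, T x ∈ Set.Icc (0 : ℝ) 1) ∧
        (∑ x, P1 x * T x ≤ ε) ∧ b = ∑ x, P0 x * (1 - T x)}
      ≤ Real.exp (-a) := by
  have hadmissible : ∑ x, P1 x * likelihoodRatioTest P0 P1 a x ≤ ε := by
    rwa [sum_mul_likelihoodRatioTest]
  calc _ ≤ ∑ x, P0 x * (1 - likelihoodRatioTest P0 P1 a x) :=
        sInf_typeTwoError_le (fun x => (hP0pos x).le) (likelihoodRatioTest_mem_Icc P0 P1 a)
          hadmissible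
    _ ≤ exp (-a) * ∑ x, P1 x := sum_mul_one_sub_likelihoodRatioTest_le P0 P1 a hP0pos hP1pos
    _ = exp (-a) := by rw [hP1, mul_one]

/-- direct part of the finite-length hypothesis testing lemma:
if the alternative-hypothesis probability of the event
`{log(P1/P0) < a}` is at most `ε`, then the minimum second-kind error
probability `β_ε(P1‖P0)` is at most `e^{-a}`. -/
theorem stmt_9 {X : Type*} [Fintype X] [Nonempty X]
    (P0 P1 : X → ℝ) (hP0pos : ∀ x, 0 < P0 x) (hP1pos : ∀ x, 0 < P1 x)
    (hP0 : ∑ x, P0 x = 1) (hP1 : ∑ x, P1 x = 1)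
    (a : ℝ) (ε : ℝ) (hε : ε ∈ Set.Icc (0 : ℝ) 1)
    (h : ∑ x ∈ Finset.univ.filter (fun x => Real.log (P1 x / P0 x) < a), P1 x ≤ ε) :
    sInf {b : ℝ | ∃ T : X → ℝ, (∀ x, T x ∈ Set.Icc (0 : ℝ) 1) ∧
        (∑ x, P1 x * T x ≤ ε) ∧ b = ∑ x, P0 x * (1 - T x)}
      ≤ Real.exp (-a) :=
  stmt_9_general P0 P1 hP0pos hP1pos hP1 a ε h
end

section
/- Let X be a nonempty finite set and let P0 and P1 be strictly positive probability distributions on X (P0(x) > 0 and P1(x) > 0 for all x). A test is a function T : X → [0,1], and for ε ∈ [0,1] define β_ε(P1‖P0) := inf { Σ_x P0(x)(1 − T(x)) : T a test with Σ_x P1(x) T(x) ≤ ε }. Then for every a ∈ ℝ, ε ∈ [0,1], and δ > 0: if P1{ x : log(P1(x)/P0(x)) < a } ≥ ε + δ, then β_ε(P1‖P0) ≥ δ e^{−a}. -/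
open scoped Classical

/-! On the event `A = {log (P1/P0) < a}` one has `e^{-a} P1 ≤ P0` pointwise. A test `T` with
`∑ P1 T ≤ ε` leaves mass at least `P1(A) - ε ≥ δ` of `P1 (1 - T)` on `A`, and comparing
`P1` with `P0` there bounds `∑ P0 (1 - T)` below by `δ e^{-a}`. -/

theorem Real.exp_neg_mul_le_of_log_div_lt {p q a : ℝ} (hp : 0 < p) (hq : 0 < q)
    (h : Real.log (p / q) < a) : Real.exp (-a) * p ≤ q := by
  have hlt : p < Real.exp a * q :=
    (div_lt_iff₀ hq).mp ((Real.log_lt_iff_lt_exp (div_pos hp hq)).mp h)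
  calc Real.exp (-a) * p ≤ Real.exp (-a) * (Real.exp a * q) := by gcongr
    _ = q := by rw [← mul_assoc, ← Real.exp_add, neg_add_cancel, Real.exp_zero, one_mul]

theorem le_sum_mul_one_sub_of_mul_le {ι : Type*} [Fintype ι] {p q T : ι → ℝ} {s : Finset ι}
    {c : ℝ} (hc : 0 ≤ c) (hp : ∀ x, 0 ≤ p x) (hq : ∀ x, 0 ≤ q x)
    (hT : ∀ x, T x ∈ Set.Icc (0 : ℝ) 1) (hs : ∀ x ∈ s, c * q x ≤ p x) :
    c * (∑ x ∈ s, q x - ∑ x, q x * T x) ≤ ∑ x, p x * (1 - T x) := by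
  have hT1 : ∀ x, 0 ≤ 1 - T x := fun x => sub_nonneg.mpr (hT x).2
  have hqT : ∑ x ∈ s, q x * T x ≤ ∑ x, q x * T x :=
    Finset.sum_le_sum_of_subset_of_nonneg s.subset_univ
      fun x _ _ => mul_nonneg (hq x) (hT x).1
  calc c * (∑ x ∈ s, q x - ∑ x, q x * T x)
      ≤ c * ∑ x ∈ s, q x * (1 - T x) := by
        gcongr
        simp only [mul_sub, mul_one, Finset.sum_sub_distrib]
        linarith
    _ = ∑ x ∈ s, c * q x * (1 - T x) := by
        rw [Finset.mul_sum]
        simp only [mul_assoc]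
    _ ≤ ∑ x ∈ s, p x * (1 - T x) :=
        Finset.sum_le_sum fun x hx => mul_le_mul_of_nonneg_right (hs x hx) (hT1 x)
    _ ≤ ∑ x, p x * (1 - T x) :=
        Finset.sum_le_sum_of_subset_of_nonneg s.subset_univ
          fun x _ _ => mul_nonneg (hp x) (hT1 x)

theorem stmt_10_general {X : Type*} [Fintype X]
    (P0 P1 : X → ℝ) (hP0pos : ∀ x, 0 < P0 x) (hP1pos : ∀ x, 0 < P1 x)
    (a : ℝ) (ε : ℝ) (hε : ε ∈ Set.Icc (0 : ℝ) 1) (δ : ℝ)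
    (h : ε + δ ≤ ∑ x ∈ Finset.univ.filter (fun x => Real.log (P1 x / P0 x) < a), P1 x) :
    δ * Real.exp (-a) ≤
      sInf {b : ℝ | ∃ T : X → ℝ, (∀ x, T x ∈ Set.Icc (0 : ℝ) 1) ∧
        (∑ x, P1 x * T x ≤ ε) ∧ b = ∑ x, P0 x * (1 - T x)} := by
  apply le_csInf
  · -- the zero test is admissible, so `sInf` is not taken over the empty set (junk value `0`)
    exact ⟨_, fun _ => 0, fun _ => ⟨le_rfl, zero_le_one⟩, by simpa using hε.1, rfl⟩
  · rintro b ⟨T, hT, hTε, rfl⟩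
    set A := Finset.univ.filter (fun x => Real.log (P1 x / P0 x) < a)
    have hratio : ∀ x ∈ A, Real.exp (-a) * P1 x ≤ P0 x := fun x hx =>
      Real.exp_neg_mul_le_of_log_div_lt (hP1pos x) (hP0pos x) (Finset.mem_filter.mp hx).2
    calc δ * Real.exp (-a) ≤ Real.exp (-a) * (∑ x ∈ A, P1 x - ∑ x, P1 x * T x) := by
          rw [mul_comm]
          gcongr
          linarith
      _ ≤ ∑ x, P0 x * (1 - T x) :=
          le_sum_mul_one_sub_of_mul_le (Real.exp_pos (-a)).le
            (fun x => (hP0pos x).le) (fun x => (hP1pos x).le) hT hratio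

/-- converse part of the finite-length hypothesis testing lemma:
if the alternative-hypothesis probability of the event `{log(P1/P0) < a}` is at
least `ε + δ`, then the minimum second-kind error probability `β_ε(P1‖P0)`
is at least `δ e^{-a}`. -/
theorem stmt_10 {X : Type*} [Fintype X] [Nonempty X]
    (P0 P1 : X → ℝ) (hP0pos : ∀ x, 0 < P0 x) (hP1pos : ∀ x, 0 < P1 x)
    (hP0 : ∑ x, P0 x = 1) (hP1 : ∑ x, P1 x = 1)
    (a : ℝ) (ε : ℝ) (hε : ε ∈ Set.Icc (0 : ℝ) 1) (δ : ℝ) (hδ : 0 < δ)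
    (h : ε + δ ≤ ∑ x ∈ Finset.univ.filter (fun x => Real.log (P1 x / P0 x) < a), P1 x) :
    δ * Real.exp (-a) ≤
      sInf {b : ℝ | ∃ T : X → ℝ, (∀ x, T x ∈ Set.Icc (0 : ℝ) 1) ∧
        (∑ x, P1 x * T x ≤ ε) ∧ b = ∑ x, P0 x * (1 - T x)} :=
  stmt_10_general P0 P1 hP0pos hP1pos a ε hε δ h
end

section
/- Let X be a nonempty finite set and let P0 and P1 be strictly positive probability distributions on X with P0 ≠ P1. Define φ(θ) := log Σ_x P0(x)^{1−θ} P1(x)^θ and D(P0‖P1) := Σ_x P0(x) log(P0(x)/P1(x)). A test is a function T : X → [0,1], and for ε ∈ [0,1] define β_ε(P1‖P0) := inf { Σ_x P0(x)(1 − T(x)) : T a test with Σ_x P1(x) T(x) ≤ ε }. Then for every r with 0 ≤ r ≤ D(P0‖P1) and every θ ∈ [0,1): β_{e^{−r}}(P1‖P0) ≤ exp( (θ r + φ(θ)) / (1 − θ) ). -/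
/-!
Chernoff's argument for the likelihood-ratio test `T = 𝟙[P1 ≤ c P0]`: at every point,
`P1 T + c P0 (1 - T) = min (c P0) P1 ≤ (c P0)^(1-θ) P1^θ`. Summing bounds the type-I error by
`c^(1-θ) e^{φ(θ)}` and the type-II error by `c^(-θ) e^{φ(θ)}`; the threshold
`c = exp (-(r + φ(θ)) / (1 - θ))` makes the first equal to `e^{-r}` and the second equal to
`exp ((θ r + φ(θ)) / (1 - θ))`.
-/

open Real Finset

theorem Real.min_le_rpow_mul_rpow {a b θ : ℝ} (ha : 0 ≤ a) (hb : 0 ≤ b) (hθ0 : 0 ≤ θ)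
    (hθ1 : θ ≤ 1) : min a b ≤ a ^ (1 - θ) * b ^ θ := by
  have hm : 0 ≤ min a b := le_min ha hb
  calc min a b = min a b ^ (1 - θ) * min a b ^ θ := by
        rw [← rpow_add' hm (by norm_num), sub_add_cancel, rpow_one]
    _ ≤ a ^ (1 - θ) * b ^ θ := by
        gcongr
        · exact min_le_left a b
        · exact min_le_right a b

section ThresholdTest

variable {X : Type*} (P0 P1 : X → ℝ) (c : ℝ)

noncomputable def thresholdTest (x : X) : ℝ := if P1 x ≤ c * P0 x then 1 else 0

theorem thresholdTest_mem_Icc (x : X) : thresholdTest P0 P1 c x ∈ Set.Icc (0 : ℝ) 1 := by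
  unfold thresholdTest
  split_ifs <;> norm_num

variable {P0 P1 c}

theorem mul_thresholdTest_add_mul_one_sub (x : X) :
    P1 x * thresholdTest P0 P1 c x + c * P0 x * (1 - thresholdTest P0 P1 c x) =
      min (c * P0 x) (P1 x) := by
  unfold thresholdTest
  split_ifs with h
  · simp [min_eq_right h]
  · simp [min_eq_left (le_of_not_ge h)]

variable {θ : ℝ}

theorem mul_thresholdTest_add_mul_one_sub_le (h0 : ∀ x, 0 ≤ P0 x) (h1 : ∀ x, 0 ≤ P1 x)
    (hc : 0 ≤ c) (hθ0 : 0 ≤ θ) (hθ1 : θ ≤ 1) (x : X) :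
    P1 x * thresholdTest P0 P1 c x + c * (P0 x * (1 - thresholdTest P0 P1 c x)) ≤
      c ^ (1 - θ) * (P0 x ^ (1 - θ) * P1 x ^ θ) := by
  calc _ = min (c * P0 x) (P1 x) := by rw [← mul_assoc, mul_thresholdTest_add_mul_one_sub]
    _ ≤ (c * P0 x) ^ (1 - θ) * P1 x ^ θ :=
        min_le_rpow_mul_rpow (mul_nonneg hc (h0 x)) (h1 x) hθ0 hθ1
    _ = c ^ (1 - θ) * (P0 x ^ (1 - θ) * P1 x ^ θ) := by rw [mul_rpow hc (h0 x), mul_assoc]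

variable [Fintype X]

theorem sum_mul_thresholdTest_le (h0 : ∀ x, 0 ≤ P0 x) (h1 : ∀ x, 0 ≤ P1 x) (hc : 0 ≤ c)
    (hθ0 : 0 ≤ θ) (hθ1 : θ ≤ 1) :
    ∑ x, P1 x * thresholdTest P0 P1 c x ≤ c ^ (1 - θ) * ∑ x, P0 x ^ (1 - θ) * P1 x ^ θ := by
  rw [mul_sum]
  refine sum_le_sum fun x _ =>
    le_trans ?_ (mul_thresholdTest_add_mul_one_sub_le h0 h1 hc hθ0 hθ1 x)
  have hT := thresholdTest_mem_Icc P0 P1 c x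
  have : 0 ≤ c * (P0 x * (1 - thresholdTest P0 P1 c x)) :=
    mul_nonneg hc (mul_nonneg (h0 x) (sub_nonneg.mpr hT.2))
  linarith

theorem sum_mul_one_sub_thresholdTest_le (h0 : ∀ x, 0 ≤ P0 x) (h1 : ∀ x, 0 ≤ P1 x)
    (hc : 0 < c) (hθ0 : 0 ≤ θ) (hθ1 : θ ≤ 1) :
    ∑ x, P0 x * (1 - thresholdTest P0 P1 c x) ≤ c ^ (-θ) * ∑ x, P0 x ^ (1 - θ) * P1 x ^ θ := by
  rw [mul_sum]
  refine sum_le_sum fun x _ => le_of_mul_le_mul_left ?_ hc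
  have hT := thresholdTest_mem_Icc P0 P1 c x
  have : 0 ≤ P1 x * thresholdTest P0 P1 c x := mul_nonneg (h1 x) hT.1
  calc _ ≤ c ^ (1 - θ) * (P0 x ^ (1 - θ) * P1 x ^ θ) := by
        linarith [mul_thresholdTest_add_mul_one_sub_le h0 h1 hc.le hθ0 hθ1 x]
    _ = c * (c ^ (-θ) * (P0 x ^ (1 - θ) * P1 x ^ θ)) := by
        rw [sub_eq_add_neg, rpow_add hc, rpow_one, mul_assoc]

end ThresholdTest

theorem sInf_typeIIError_le {X : Type*} [Fintype X] {P0 P1 : X → ℝ} (h0 : ∀ x, 0 ≤ P0 x)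
    {ε : ℝ} {T : X → ℝ} (hT : ∀ x, T x ∈ Set.Icc (0 : ℝ) 1) (hε : ∑ x, P1 x * T x ≤ ε) :
    sInf {b : ℝ | ∃ T : X → ℝ, (∀ x, T x ∈ Set.Icc (0 : ℝ) 1) ∧
        (∑ x, P1 x * T x ≤ ε) ∧ b = ∑ x, P0 x * (1 - T x)} ≤ ∑ x, P0 x * (1 - T x) := by
  refine csInf_le ⟨0, ?_⟩ ⟨T, hT, hε, rfl⟩
  rintro b ⟨T', hT', -, rfl⟩
  exact sum_nonneg fun x _ => mul_nonneg (h0 x) (sub_nonneg.mpr (hT' x).2)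

theorem stmt_11_general {X : Type*} [Fintype X] [Nonempty X]
    (P0 P1 : X → ℝ) (hP0pos : ∀ x, 0 < P0 x) (hP1pos : ∀ x, 0 < P1 x)
    (φ : ℝ → ℝ) (hφ : ∀ θ, φ θ = Real.log (∑ x, P0 x ^ (1 - θ) * P1 x ^ θ))
    (r : ℝ) (θ : ℝ) (hθ : θ ∈ Set.Ico (0 : ℝ) 1) :
    sInf {b : ℝ | ∃ T : X → ℝ, (∀ x, T x ∈ Set.Icc (0 : ℝ) 1) ∧
        (∑ x, P1 x * T x ≤ Real.exp (-r)) ∧ b = ∑ x, P0 x * (1 - T x)}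
      ≤ Real.exp ((θ * r + φ θ) / (1 - θ)) := by
  obtain ⟨hθ0, hθ1⟩ := hθ
  have h0 x := (hP0pos x).le
  have h1 x := (hP1pos x).le
  have hZ : exp (φ θ) = ∑ x, P0 x ^ (1 - θ) * P1 x ^ θ := by
    rw [hφ, exp_log (sum_pos (fun x _ => mul_pos (rpow_pos_of_pos (hP0pos x) _)
      (rpow_pos_of_pos (hP1pos x) _)) univ_nonempty)]
  set c := exp (-(r + φ θ) / (1 - θ))
  have hc : 0 < c := exp_pos _
  have hθ1' : 1 - θ ≠ 0 := by linarith
  have htypeI : c ^ (1 - θ) * exp (φ θ) = exp (-r) := by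
    rw [← exp_mul, ← exp_add, div_mul_cancel₀ _ hθ1']
    congr 1
    ring
  have htypeII : c ^ (-θ) * exp (φ θ) = exp ((θ * r + φ θ) / (1 - θ)) := by
    rw [← exp_mul, ← exp_add]
    congr 1
    field_simp
    ring
  have hα : ∑ x, P1 x * thresholdTest P0 P1 c x ≤ exp (-r) := by
    simpa only [← hZ, htypeI] using sum_mul_thresholdTest_le h0 h1 hc.le hθ0 hθ1.le
  have hβ : ∑ x, P0 x * (1 - thresholdTest P0 P1 c x) ≤ exp ((θ * r + φ θ) / (1 - θ)) := by
    simpa only [← hZ, htypeII] using sum_mul_one_sub_thresholdTest_le h0 h1 hc hθ0 hθ1.le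
  exact (sInf_typeIIError_le h0 (thresholdTest_mem_Icc P0 P1 c) hα).trans hβ

/-- direct (achievability) part of the Hoeffding-type bound for
binary hypothesis testing:
`β_{e^{-r}}(P1‖P0) ≤ exp((θr + φ(θ))/(1-θ))` for `0 ≤ r ≤ D(P0‖P1)` and
`θ ∈ [0,1)`, where `φ(θ) = log ∑ P0^{1-θ} P1^θ`. -/
theorem stmt_11 {X : Type*} [Fintype X] [Nonempty X]
    (P0 P1 : X → ℝ) (hP0pos : ∀ x, 0 < P0 x) (hP1pos : ∀ x, 0 < P1 x)
    (hP0 : ∑ x, P0 x = 1) (hP1 : ∑ x, P1 x = 1) (hne : P0 ≠ P1)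
    (φ : ℝ → ℝ) (hφ : ∀ θ, φ θ = Real.log (∑ x, P0 x ^ (1 - θ) * P1 x ^ θ))
    (D : ℝ) (hD : D = ∑ x, P0 x * Real.log (P0 x / P1 x))
    (r : ℝ) (hr0 : 0 ≤ r) (hrD : r ≤ D)
    (θ : ℝ) (hθ : θ ∈ Set.Ico (0 : ℝ) 1) :
    sInf {b : ℝ | ∃ T : X → ℝ, (∀ x, T x ∈ Set.Icc (0 : ℝ) 1) ∧
        (∑ x, P1 x * T x ≤ Real.exp (-r)) ∧ b = ∑ x, P0 x * (1 - T x)}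
      ≤ Real.exp ((θ * r + φ θ) / (1 - θ)) :=
  stmt_11_general P0 P1 hP0pos hP1pos φ hφ r θ hθ
end

section
/- Let X be a nonempty finite set and let P0 and P1 be strictly positive probability distributions on X. Define φ(θ) := log Σ_x P0(x)^{1−θ} P1(x)^θ and the exponential family P_θ(x) := P0(x)^{1−θ} P1(x)^θ e^{−φ(θ)}. Then for every r ∈ ℝ, every θ ∈ ℝ, every θ̄ ≥ 0, and every subset S ⊆ X with P1(S) ≤ e^{−r}: P_θ(S) ≤ 2 · exp( ( −(1+θ̄) φ(θ) + φ((1+θ̄)θ − θ̄) − θ̄ r ) / (1+θ̄) ). -/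
/-!
Writing `P0^(1-t) P1^t = P1 · (P0/P1)^(1-t)`, the sum `∑_{x∈S} P0^(1-θ) P1^θ` is the
`P1`-integral over `S` of a power of the likelihood ratio. Weighted Hölder with exponent
`p = 1 + θbar ≥ 1` and weight `P1` bounds it by `P1(S)^(1-1/p)` times the `1/p`-th power of the
same kind of sum at `θ' = (1+θbar)θ - θbar`. The latter is at most `e^{φ(θ')}`, the former at most
`e^{-r(1-1/p)}`, and normalising by `e^{-φ(θ)}` gives the bound.
-/

open Real Finset

lemma rpow_one_sub_mul_rpow_eq_mul_div_rpow {a b : ℝ} (ha : 0 < a) (hb : 0 < b) (t : ℝ) :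
    a ^ (1 - t) * b ^ t = b * (a / b) ^ (1 - t) := by
  rw [div_rpow ha.le hb.le, rpow_sub hb, rpow_one]
  field_simp

lemma sum_rpow_one_sub_mul_rpow_le {ι : Type*} (s : Finset ι) {a b : ι → ℝ}
    (ha : ∀ i, 0 < a i) (hb : ∀ i, 0 < b i) (θ : ℝ) {p : ℝ} (hp : 1 ≤ p) :
    ∑ i ∈ s, a i ^ (1 - θ) * b i ^ θ ≤
      (∑ i ∈ s, b i) ^ (1 - p⁻¹) *
        (∑ i ∈ s, a i ^ (p * (1 - θ)) * b i ^ (1 - p * (1 - θ))) ^ p⁻¹ := by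
  have hratio : ∀ i, 0 < a i / b i := fun i ↦ div_pos (ha i) (hb i)
  have hholder := inner_le_weight_mul_Lp_of_nonneg s hp b (fun i ↦ (a i / b i) ^ (1 - θ))
    (fun i ↦ (hb i).le) (fun i ↦ (rpow_pos_of_pos (hratio i) _).le)
  simp only [← rpow_mul (hratio _).le] at hholder
  have hweighted : ∀ t : ℝ, ∑ i ∈ s, a i ^ (1 - t) * b i ^ t = ∑ i ∈ s, b i * (a i / b i) ^ (1 - t) :=
    fun t ↦ sum_congr rfl fun i _ ↦ rpow_one_sub_mul_rpow_eq_mul_div_rpow (ha i) (hb i) t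
  have hweighted_p := hweighted (1 - p * (1 - θ))
  rw [sub_sub_cancel] at hweighted_p
  rw [hweighted, hweighted_p, mul_comm p]
  exact hholder

theorem stmt_12_general {X : Type*} [Fintype X] [Nonempty X]
    (P0 P1 : X → ℝ) (hP0pos : ∀ x, 0 < P0 x) (hP1pos : ∀ x, 0 < P1 x)
    (φ : ℝ → ℝ) (hφ : ∀ θ, φ θ = Real.log (∑ x, P0 x ^ (1 - θ) * P1 x ^ θ))
    (Pθ : ℝ → X → ℝ)
    (hPθ : ∀ θ x, Pθ θ x = P0 x ^ (1 - θ) * P1 x ^ θ * Real.exp (-φ θ))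
    (r : ℝ) (θ : ℝ) (θbar : ℝ) (hθbar : 0 ≤ θbar)
    (S : Finset X) (hS : ∑ x ∈ S, P1 x ≤ Real.exp (-r)) :
    ∑ x ∈ S, Pθ θ x ≤
      2 * Real.exp ((-(1 + θbar) * φ θ + φ ((1 + θbar) * θ - θbar) - θbar * r)
        / (1 + θbar)) := by
  have hterm_pos : ∀ (t : ℝ) x, 0 < P0 x ^ (1 - t) * P1 x ^ t := fun t x ↦
    mul_pos (rpow_pos_of_pos (hP0pos x) _) (rpow_pos_of_pos (hP1pos x) _)
  have hpartial_le_exp : ∀ t, ∑ x ∈ S, P0 x ^ (1 - t) * P1 x ^ t ≤ exp (φ t) := fun t ↦ by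
    rw [hφ, exp_log (sum_pos (fun x _ ↦ hterm_pos t x) univ_nonempty)]
    exact sum_le_univ_sum_of_nonneg fun x ↦ (hterm_pos t x).le
  set θ' := (1 + θbar) * θ - θbar
  have hholder := sum_rpow_one_sub_mul_rpow_le S hP0pos hP1pos θ (p := 1 + θbar) (by linarith)
  rw [show 1 - (1 + θbar) * (1 - θ) = θ' by ring, show (1 + θbar) * (1 - θ) = 1 - θ' by ring]
    at hholder
  have hbound : ∑ x ∈ S, Pθ θ x ≤
      exp (-r) ^ (1 - (1 + θbar)⁻¹) * exp (φ θ') ^ (1 + θbar)⁻¹ * exp (-φ θ) := by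
    simp only [hPθ, ← sum_mul]
    refine mul_le_mul_of_nonneg_right (hholder.trans ?_) (exp_pos _).le
    have hθ'_nonneg : 0 ≤ ∑ x ∈ S, P0 x ^ (1 - θ') * P1 x ^ θ' :=
      sum_nonneg fun x _ ↦ (hterm_pos θ' x).le
    exact mul_le_mul
      (rpow_le_rpow (sum_nonneg fun x _ ↦ (hP1pos x).le) hS (sub_nonneg.2 (inv_le_one_of_one_le₀ (by linarith))))
      (rpow_le_rpow hθ'_nonneg (hpartial_le_exp θ') (by positivity))
      (rpow_nonneg hθ'_nonneg _) (by positivity)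
  calc ∑ x ∈ S, Pθ θ x
      ≤ exp (-r) ^ (1 - (1 + θbar)⁻¹) * exp (φ θ') ^ (1 + θbar)⁻¹ * exp (-φ θ) := hbound
    _ = exp ((-(1 + θbar) * φ θ + φ θ' - θbar * r) / (1 + θbar)) := by
      rw [← exp_mul, ← exp_mul, ← exp_add, ← exp_add]
      congr 1
      field_simp
      ring
    _ ≤ 2 * exp ((-(1 + θbar) * φ θ + φ θ' - θbar * r) / (1 + θbar)) :=
      le_mul_of_one_le_left (exp_pos _).le one_le_two

/-- any rejection region `S` with small alternative-hypothesis
probability `P1(S) ≤ e^{-r}` has small probability under every member `P_θ` of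
the exponential family connecting `P0` and `P1`. -/
theorem stmt_12 {X : Type*} [Fintype X] [Nonempty X]
    (P0 P1 : X → ℝ) (hP0pos : ∀ x, 0 < P0 x) (hP1pos : ∀ x, 0 < P1 x)
    (hP0 : ∑ x, P0 x = 1) (hP1 : ∑ x, P1 x = 1)
    (φ : ℝ → ℝ) (hφ : ∀ θ, φ θ = Real.log (∑ x, P0 x ^ (1 - θ) * P1 x ^ θ))
    (Pθ : ℝ → X → ℝ)
    (hPθ : ∀ θ x, Pθ θ x = P0 x ^ (1 - θ) * P1 x ^ θ * Real.exp (-φ θ))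
    (r : ℝ) (θ : ℝ) (θbar : ℝ) (hθbar : 0 ≤ θbar)
    (S : Finset X) (hS : ∑ x ∈ S, P1 x ≤ Real.exp (-r)) :
    ∑ x ∈ S, Pθ θ x ≤
      2 * Real.exp ((-(1 + θbar) * φ θ + φ ((1 + θbar) * θ - θbar) - θbar * r)
        / (1 + θbar)) :=
  stmt_12_general P0 P1 hP0pos hP1pos φ hφ Pθ hPθ r θ θbar hθbar S hS
end

section
/- Let φ : ℝ → ℝ be differentiable and strictly convex with φ(0) = 0. (i) Suppose a ∈ ℝ satisfies a > φ'(0) and a = φ'(θ_a) for some θ_a ∈ ℝ (necessarily θ_a > 0 and unique). Then inf { (φ((1+s)θ) − (1+s)φ(θ))/s : s > 0, θ > θ_a } = θ_a · a − φ(θ_a) = sup_{θ ≥ 0} ( θ a − φ(θ) ). (ii) Suppose a ∈ ℝ satisfies a < φ'(0) and a = φ'(θ_a) for some θ_a ∈ ℝ (necessarily θ_a < 0 and unique). Then inf { (φ((1+s)θ) − (1+s)φ(θ))/s : s > 0, θ < θ_a } = θ_a · a − φ(θ_a) = sup_{θ ≤ 0} ( θ a − φ(θ) ). -/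
/-!
Write `R(s, θ) = (φ((1+s)θ) - (1+s)φ(θ))/s` and `ψ(θ) = θφ'(θ) - φ(θ)`. Tangency gives
`x φ'(θ) - φ(x) ≤ ψ(θ)` for all `x` and `θ`. With `θ = θa` this bounds the Legendre objective by
`ψ(θa) = θa a - φ(θa)`; with `x = (1+s)θ` it gives `ψ(θ) ≤ R(s, θ)`; with `x = θa` it gives
`ψ(θa) ≤ ψ(θ)` whenever `θa (φ'(θ) - a) ≥ 0`, which monotonicity of `φ'` ensures on the range of
`θ` in question. Conversely `R(s, θ) → ψ(θ)` as `s → 0⁺`, and `ψ(θ) → ψ(θa)` as `θ → θa` because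
the strictly increasing derivative `φ'` is continuous.
-/

open Set Filter Topology

lemma ConvexOn.mul_sub_le_of_hasDerivAt {S : Set ℝ} {f : ℝ → ℝ} {f' x y : ℝ}
    (hf : ConvexOn ℝ S f) (hx : x ∈ S) (hy : y ∈ S) (hd : HasDerivAt f f' x) :
    y * f' - f y ≤ x * f' - f x := by
  rcases lt_trichotomy x y with hxy | rfl | hxy
  · have h := hf.le_slope_of_hasDerivAt hx hy hxy hd
    rw [slope_def_field, le_div_iff₀ (sub_pos.2 hxy)] at h
    linarith
  · rfl
  · have h := hf.slope_le_of_hasDerivAt hy hx hxy hd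
    rw [slope_def_field, div_le_iff₀ (sub_pos.2 hxy)] at h
    linarith

/-- By Darboux's theorem the range of `f'` is order-connected, and a strictly monotone function
whose range is order-connected has no jumps. -/
lemma StrictMono.continuous_of_hasDerivAt {f f' : ℝ → ℝ} (hf : ∀ x, HasDerivAt f (f' x) x)
    (hmono : StrictMono f') : Continuous f' := by
  have hrange : OrdConnected (f' '' univ) :=
    ordConnected_univ.image_hasDerivWithinAt fun x _ => (hf x).hasDerivWithinAt
  refine continuous_iff_continuousAt.2 fun x =>
    (hmono.strictMonoOn univ).continuousAt_of_image_mem_nhds univ_mem ?_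
  exact mem_of_superset (Icc_mem_nhds (hmono (sub_one_lt x)) (hmono (lt_add_one x)))
    (hrange.out ⟨_, trivial, rfl⟩ ⟨_, trivial, rfl⟩)

lemma HasDerivAt.tendsto_renyi_quotient {φ : ℝ → ℝ} {φ' θ : ℝ} (hφ : HasDerivAt φ φ' θ) :
    Tendsto (fun s => (φ ((1 + s) * θ) - (1 + s) * φ θ) / s) (𝓝[≠] 0)
      (𝓝 (θ * φ' - φ θ)) := by
  have hline : HasDerivAt (fun s => φ ((1 + s) * θ) - (1 + s) * φ θ) (φ' * θ - φ θ) 0 := by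
    have hlin (c : ℝ) : HasDerivAt (fun s : ℝ => (1 + s) * c) c 0 := by
      simpa using ((hasDerivAt_id (0 : ℝ)).const_add 1).mul_const c
    exact (hφ.comp_of_eq 0 (hlin θ) (by ring)).sub (hlin (φ θ))
  convert hline.tendsto_slope_zero using 2 with s
  · simp [div_eq_inv_mul]
  · ring

section Legendre

variable {φ φ' : ℝ → ℝ} (hφ : ∀ θ, HasDerivAt φ (φ' θ) θ) (hconv : ConvexOn ℝ univ φ)
include hφ hconv

lemma isLUB_legendre_objective {θa : ℝ} {T : Set ℝ} (hθa : θa ∈ T) :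
    IsLUB {y | ∃ θ ∈ T, y = θ * φ' θa - φ θ} (θa * φ' θa - φ θa) :=
  ⟨by rintro _ ⟨θ, -, rfl⟩; exact hconv.mul_sub_le_of_hasDerivAt trivial trivial (hφ θa),
    fun _ hb => hb ⟨θa, hθa, rfl⟩⟩

lemma isGLB_renyi_quotient {θa : ℝ} {T : Set ℝ} [(𝓝[T] θa).NeBot] (hcont : ContinuousAt φ' θa)
    (hsign : ∀ θ ∈ T, θa * φ' θa ≤ θa * φ' θ) :
    IsGLB {y | ∃ s : ℝ, 0 < s ∧ ∃ θ ∈ T, y = (φ ((1 + s) * θ) - (1 + s) * φ θ) / s}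
      (θa * φ' θa - φ θa) := by
  have hrenyi_ge : ∀ s > 0, ∀ θ, θ * φ' θ - φ θ ≤ (φ ((1 + s) * θ) - (1 + s) * φ θ) / s := by
    intro s hs θ
    have := hconv.mul_sub_le_of_hasDerivAt trivial trivial (hφ θ) (y := (1 + s) * θ)
    rw [le_div_iff₀ hs]
    nlinarith
  refine ⟨?_, fun b hb => ?_⟩
  · rintro _ ⟨s, hs, θ, hθ, rfl⟩
    calc θa * φ' θa - φ θa ≤ θa * φ' θ - φ θa := by linarith [hsign θ hθ]
      _ ≤ θ * φ' θ - φ θ := hconv.mul_sub_le_of_hasDerivAt trivial trivial (hφ θ)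
      _ ≤ _ := hrenyi_ge s hs θ
  have hb_le : ∀ θ ∈ T, b ≤ θ * φ' θ - φ θ := by
    intro θ hθ
    have hlim : Tendsto _ (𝓝[>] (0 : ℝ)) _ :=
      (hφ θ).tendsto_renyi_quotient.mono_left (nhdsWithin_mono _ fun _ h => ne_of_gt h)
    exact ge_of_tendsto hlim
      (eventually_nhdsWithin_of_forall fun s hs => hb ⟨s, hs, θ, hθ, rfl⟩)
  have hψ : ContinuousAt (fun θ => θ * φ' θ - φ θ) θa :=
    (continuousAt_id.mul hcont).sub (hφ θa).continuousAt
  exact ge_of_tendsto (hψ.tendsto.mono_left nhdsWithin_le_nhds)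
    (eventually_nhdsWithin_of_forall hb_le)

end Legendre

theorem stmt_14_general (φ : ℝ → ℝ) (φ' : ℝ → ℝ)
    (hderiv : ∀ θ, HasDerivAt φ (φ' θ) θ)
    (hconv : StrictConvexOn ℝ Set.univ φ) :
    (∀ a θa : ℝ, φ' 0 < a → φ' θa = a →
      IsGLB {y : ℝ | ∃ s : ℝ, 0 < s ∧ ∃ θ : ℝ, θa < θ ∧
          y = (φ ((1 + s) * θ) - (1 + s) * φ θ) / s}
        (θa * a - φ θa) ∧
      IsLUB {y : ℝ | ∃ θ : ℝ, 0 ≤ θ ∧ y = θ * a - φ θ} (θa * a - φ θa)) ∧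
    (∀ a θa : ℝ, a < φ' 0 → φ' θa = a →
      IsGLB {y : ℝ | ∃ s : ℝ, 0 < s ∧ ∃ θ : ℝ, θ < θa ∧
          y = (φ ((1 + s) * θ) - (1 + s) * φ θ) / s}
        (θa * a - φ θa) ∧
      IsLUB {y : ℝ | ∃ θ : ℝ, θ ≤ 0 ∧ y = θ * a - φ θ} (θa * a - φ θa)) := by
  have hmono : StrictMono φ' := by
    have h := hconv.strictMonoOn_deriv fun x _ => (hderiv x).differentiableAt
    rwa [funext fun x => (hderiv x).deriv, strictMonoOn_univ] at h
  have hcont := hmono.continuous_of_hasDerivAt hderiv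
  refine ⟨fun a θa ha hθa => ?_, fun a θa ha hθa => ?_⟩ <;> subst hθa
  · have hpos : 0 < θa := hmono.lt_iff_lt.mp ha
    exact ⟨isGLB_renyi_quotient (T := Ioi θa) hderiv hconv.convexOn hcont.continuousAt
        fun θ hθ => mul_le_mul_of_nonneg_left (hmono hθ).le hpos.le,
      isLUB_legendre_objective hderiv hconv.convexOn (mem_Ici.2 hpos.le)⟩
  · have hneg : θa < 0 := hmono.lt_iff_lt.mp ha
    exact ⟨isGLB_renyi_quotient (T := Iio θa) hderiv hconv.convexOn hcont.continuousAt
        fun θ hθ => mul_le_mul_of_nonpos_left (hmono hθ).le hneg.le,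
      isLUB_legendre_objective hderiv hconv.convexOn (mem_Iic.2 hneg.le)⟩

/-- Legendre transform of a strictly convex potential function
`φ` with `φ(0) = 0` as an infimum of Rényi-type quantities. -/
theorem stmt_14 (φ : ℝ → ℝ) (φ' : ℝ → ℝ)
    (hderiv : ∀ θ, HasDerivAt φ (φ' θ) θ)
    (hconv : StrictConvexOn ℝ Set.univ φ) (h0 : φ 0 = 0) :
    (∀ a θa : ℝ, φ' 0 < a → φ' θa = a →
      IsGLB {y : ℝ | ∃ s : ℝ, 0 < s ∧ ∃ θ : ℝ, θa < θ ∧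
          y = (φ ((1 + s) * θ) - (1 + s) * φ θ) / s}
        (θa * a - φ θa) ∧
      IsLUB {y : ℝ | ∃ θ : ℝ, 0 ≤ θ ∧ y = θ * a - φ θ} (θa * a - φ θa)) ∧
    (∀ a θa : ℝ, a < φ' 0 → φ' θa = a →
      IsGLB {y : ℝ | ∃ s : ℝ, 0 < s ∧ ∃ θ : ℝ, θ < θa ∧
          y = (φ ((1 + s) * θ) - (1 + s) * φ θ) / s}
        (θa * a - φ θa) ∧
      IsLUB {y : ℝ | ∃ θ : ℝ, θ ≤ 0 ∧ y = θ * a - φ θ} (θa * a - φ θa)) :=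
  stmt_14_general φ φ' hderiv hconv
end

section
/- Let φ : ℝ → ℝ be differentiable and strictly convex with φ(0) = 0 and φ(1) = 0. Let r satisfy 0 < r ≤ −φ'(0), and let θ̂ ∈ [0,1) satisfy (θ̂ − 1) φ'(θ̂) − φ(θ̂) = r (such θ̂ exists and is unique in [0,1) since θ ↦ (θ−1)φ'(θ) − φ(θ) is continuous and strictly decreasing on [0,1)). Then sup_{θ ∈ [0,1)} ( −θ r − φ(θ) ) / (1 − θ) = θ̂ φ'(θ̂) − φ(θ̂) = inf { (φ((1+s)θ) − (1+s)φ(θ))/s : s > 0, θ ∈ [θ̂, 1) }. -/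
/-! The tangent line of `φ` at `θ̂` lies below `φ`; since `r = (θ̂ - 1) φ'(θ̂) - φ(θ̂)`, this is
exactly the statement that every Hoeffding quotient is at most `θ̂ φ'(θ̂) - φ(θ̂)`, with equality
at `θ = θ̂`. For the Rényi side, the tangent line at `θ` bounds the quotient at `(s, θ)` below by
`θ φ'(θ) - φ(θ)`, which is nondecreasing on `θ ≥ 0` because `φ'` is; and the quotient at `(s, θ̂)`
is a difference quotient of `s ↦ φ((1 + s) θ̂)`, so it tends to `θ̂ φ'(θ̂) - φ(θ̂)` as `s → 0⁺`. -/

open Filter Set Topology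

/-- `D_{1+s}(W_θ ‖ W_0)` written through the potential `φ`. -/
noncomputable def potentialRenyi (φ : ℝ → ℝ) (s θ : ℝ) : ℝ :=
  (φ ((1 + s) * θ) - (1 + s) * φ θ) / s

section Convex

variable {f f' : ℝ → ℝ} {S : Set ℝ}

lemma ConvexOn.add_mul_sub_le_of_hasDerivAt {a x y : ℝ} (hf : ConvexOn ℝ S f) (hx : x ∈ S)
    (hy : y ∈ S) (hd : HasDerivAt f a x) : f x + a * (y - x) ≤ f y := by
  rcases lt_trichotomy x y with hxy | rfl | hxy
  · have h := hf.le_slope_of_hasDerivAt hx hy hxy hd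
    rw [slope_def_field, le_div_iff₀ (sub_pos.mpr hxy)] at h
    linarith
  · simp
  · have h := hf.slope_le_of_hasDerivAt hy hx hxy hd
    rw [slope_def_field, div_le_iff₀ (sub_pos.mpr hxy)] at h
    linarith

lemma ConvexOn.monotoneOn_mul_deriv_sub (hf : ConvexOn ℝ S f)
    (hd : ∀ x ∈ S, HasDerivAt f (f' x) x) :
    MonotoneOn (fun x ↦ x * f' x - f x) (S ∩ Ici 0) := by
  rintro x ⟨hxS, hx0⟩ y ⟨hyS, -⟩ hxy
  have hderiv_le : f' x ≤ f' y := by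
    have h := hf.monotoneOn_deriv (fun z hz ↦ (hd z hz).differentiableAt) hxS hyS hxy
    rwa [(hd x hxS).deriv, (hd y hyS).deriv] at h
  have htangent := hf.add_mul_sub_le_of_hasDerivAt hyS hxS (hd y hyS)
  nlinarith [mul_nonneg hx0 (sub_nonneg.mpr hderiv_le)]

lemma ConvexOn.mul_deriv_sub_le_potentialRenyi {a s θ : ℝ} (hf : ConvexOn ℝ univ f)
    (hd : HasDerivAt f a θ) (hs : 0 < s) : θ * a - f θ ≤ potentialRenyi f s θ := by
  have h := hf.add_mul_sub_le_of_hasDerivAt (mem_univ θ) (mem_univ ((1 + s) * θ)) hd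
  rw [potentialRenyi, le_div_iff₀ hs]
  nlinarith

lemma ConvexOn.hoeffding_le {a θ θ₀ : ℝ} (hf : ConvexOn ℝ univ f) (hd : HasDerivAt f a θ₀)
    (hθ : θ < 1) : (-θ * ((θ₀ - 1) * a - f θ₀) - f θ) / (1 - θ) ≤ θ₀ * a - f θ₀ := by
  have h := hf.add_mul_sub_le_of_hasDerivAt (mem_univ θ₀) (mem_univ θ) hd
  rw [div_le_iff₀ (sub_pos.mpr hθ)]
  nlinarith

end Convex

lemma HasDerivAt.tendsto_potentialRenyi {f : ℝ → ℝ} {a θ : ℝ} (hd : HasDerivAt f a θ) :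
    Tendsto (fun s ↦ potentialRenyi f s θ) (𝓝[≠] 0) (𝓝 (θ * a - f θ)) := by
  have hcomp : HasDerivAt (fun s ↦ f ((1 + s) * θ)) (a * θ) 0 := by
    have hlin : HasDerivAt (fun s : ℝ ↦ (1 + s) * θ) θ 0 := by
      simpa using ((hasDerivAt_id (0 : ℝ)).const_add 1).mul_const θ
    have hd' : HasDerivAt f a ((1 + 0) * θ) := by simpa using hd
    exact hd'.comp 0 hlin
  have hslope := (hasDerivAt_iff_tendsto_slope.mp hcomp).sub_const (f θ)
  rw [mul_comm] at hslope
  refine hslope.congr' (eventually_nhdsWithin_of_forall fun s (hs : s ≠ 0) ↦ ?_)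
  simp only [slope_def_field, potentialRenyi, add_zero, one_mul, sub_zero]
  field_simp
  ring

theorem stmt_15_general (φ : ℝ → ℝ) (φ' : ℝ → ℝ)
    (hderiv : ∀ θ, HasDerivAt φ (φ' θ) θ)
    (hconv : StrictConvexOn ℝ Set.univ φ)
    (r : ℝ)
    (θhat : ℝ) (hθhat : θhat ∈ Set.Ico (0 : ℝ) 1)
    (heq : (θhat - 1) * φ' θhat - φ θhat = r) :
    IsLUB {y : ℝ | ∃ θ ∈ Set.Ico (0 : ℝ) 1, y = (-θ * r - φ θ) / (1 - θ)}
      (θhat * φ' θhat - φ θhat) ∧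
    IsGLB {y : ℝ | ∃ s : ℝ, 0 < s ∧ ∃ θ ∈ Set.Ico θhat 1,
        y = (φ ((1 + s) * θ) - (1 + s) * φ θ) / s}
      (θhat * φ' θhat - φ θhat) := by
  subst heq
  have hcvx := hconv.convexOn
  refine ⟨IsGreatest.isLUB ⟨?_, ?_⟩, isGLB_of_mem_closure ?_ ?_⟩
  · refine ⟨θhat, hθhat, ?_⟩
    rw [eq_div_iff (sub_pos.mpr hθhat.2).ne']
    ring
  · rintro y ⟨θ, hθ, rfl⟩
    exact hcvx.hoeffding_le (hderiv θhat) hθ.2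
  · rintro y ⟨s, hs, θ, hθ, rfl⟩
    have hmono := hcvx.monotoneOn_mul_deriv_sub (fun x _ ↦ hderiv x)
      ⟨mem_univ _, hθhat.1⟩ ⟨mem_univ _, hθhat.1.trans hθ.1⟩ hθ.1
    exact hmono.trans (hcvx.mul_deriv_sub_le_potentialRenyi (hderiv θ) hs)
  · refine mem_closure_of_tendsto
      ((hderiv θhat).tendsto_potentialRenyi.mono_left (nhdsGT_le_nhdsNE 0)) ?_
    filter_upwards [self_mem_nhdsWithin] with s hs
    exact ⟨s, hs, θhat, ⟨le_rfl, hθhat.2⟩, rfl⟩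

/-- identification of the Hoeffding exponent
`sup_{0 ≤ θ < 1} (−θr − φ(θ))/(1−θ)` with `θ̂ φ'(θ̂) − φ(θ̂)` and with an
infimum of Rényi-type quantities, for a strictly convex potential `φ` with
`φ(0) = φ(1) = 0`. -/
theorem stmt_15 (φ : ℝ → ℝ) (φ' : ℝ → ℝ)
    (hderiv : ∀ θ, HasDerivAt φ (φ' θ) θ)
    (hconv : StrictConvexOn ℝ Set.univ φ) (h0 : φ 0 = 0) (h1 : φ 1 = 0)
    (r : ℝ) (hr0 : 0 < r) (hr1 : r ≤ -φ' 0)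
    (θhat : ℝ) (hθhat : θhat ∈ Set.Ico (0 : ℝ) 1)
    (heq : (θhat - 1) * φ' θhat - φ θhat = r) :
    IsLUB {y : ℝ | ∃ θ ∈ Set.Ico (0 : ℝ) 1, y = (-θ * r - φ θ) / (1 - θ)}
      (θhat * φ' θhat - φ θhat) ∧
    IsGLB {y : ℝ | ∃ s : ℝ, 0 < s ∧ ∃ θ ∈ Set.Ico θhat 1,
        y = (φ ((1 + s) * θ) - (1 + s) * φ θ) / s}
      (θhat * φ' θhat - φ θhat) :=
  stmt_15_general φ φ' hderiv hconv r θhat hθhat heq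
end
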